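/- arXiv:2307.16792 — 4 statements merged into one kernel-verified Lean document; each statement's English description precedes it below -/
import Mathlib

section
/- Let d, n ∈ ℕ, let P be a Borel probability measure on Z = [0,1]^d × {−1,1}, and let F be a nonempty class of Borel measurable functions from [0,1]^d to ℝ with ρ := sup_{f∈F} sup_{x∈[0,1]^d} |f(x)| < ∞. For a Borel measurable g: [0,1]^d → ℝ write R^φ_P(g) = ∫_Z φ(y·g(x)) dP(x,y). Suppose ψ: Z → ℝ is Borel measurable, (M,Γ,γ) ∈ (0,∞)³, and W is an integer with W ≥ 3 such that: (i) ∫ ψ dP ≤ inf_{f∈F} R^φ_P(f); (ii) sup{φ(t) : t ∈ ℝ, |t| ≤ ρ} ≤ M and |ψ(x,y)| ≤ M for all (x,y) ∈ Z; (iii) ∫ (φ(y·f(x)) − ψ(x,y))² dP(x,y) ≤ Γ·∫ (φ(y·f(x)) − ψ(x,y)) dP(x,y) for every f ∈ F; (iv) there exist f₁,…,f_W ∈ F such that for every f ∈ F there is some j ∈ {1,…,W} with sup_{x∈[0,1]^d} |f(x) − f_j(x)| ≤ γ. Let f̂ be an empirical logistic-risk minimizer over F from samples of size n. Then for every ε ∈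 (0,1): ∫_{Z^n} (R^φ_P(f̂_z) − ∫ ψ dP) dP^{⊗n}(z) ≤ 80·((1+ε)²/ε)·Γ·log(W)/n + 20·(1+ε)·M·log(W)/n + 20·(1+ε)·√γ·√(Γ·log(W)/n) + 4·γ + (1+ε)·inf_{f∈F} (R^φ_P(f) − ∫ ψ dP). -/
/-!
For each function `f_j` of the `γ`-net, the excess loss `X_j = φ(y f_j(x)) - ψ(x, y)` is bounded
by `2M` and satisfies `E X_j² ≤ Γ E X_j`, so `E exp(-t X_j) ≤ exp(-t (1 - tΓ) E X_j)` for small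
`t`. Over an i.i.d. sample this makes `exp(λ (E X_j - (1 + ε)/n Σᵢ X_j(Zᵢ)))` have mean at most `1`
for `λ = n / K`, `K = 2(1 + ε)M + (1 + ε)²Γ/ε`; Jensen and a union bound over the net then bound
the mean of the largest of these deviations by `K log W / n`. As `φ` is 1-Lipschitz and
`|y| = 1`, passing from `f̂` to a net function within `γ` of it and comparing empirical risks with
an arbitrary `f ∈ F` costs only `(2 + ε)γ`. Averaging over the sample and taking the infimum over
`f` gives a bound below the stated one.
-/

open MeasureTheory
open scoped ENNReal NNReal

namespace DNNLogistic

noncomputable section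

/-- The unit cube `[0,1]^d` as a subset of `ℝ^d`. -/
def cube (d : ℕ) : Set (Fin d → ℝ) := {x | ∀ i, x i ∈ Set.Icc (0 : ℝ) 1}

/-- The logistic loss `φ(t) = log (1 + e^{-t})`. -/
def logLoss (t : ℝ) : ℝ := Real.log (1 + Real.exp (-t))

/-- `sgn(t) = 1` if `t ≥ 0`, `sgn(t) = -1` otherwise. -/
def rsgn (t : ℝ) : ℝ := if 0 ≤ t then 1 else -1

/-- The Euclidean distance `‖x - z‖₂` on `ℝ^m`. -/
def eucDist {m : ℕ} (x z : Fin m → ℝ) : ℝ := Real.sqrt (∑ i, (x i - z i) ^ 2)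

/-- The logistic risk `R^φ_{η,Q}(f)` of `f` with respect to the conditional probability
function `η` and the marginal distribution `Q` on `[0,1]^d`. -/
def logRisk (d : ℕ) (Q : Measure (Fin d → ℝ)) (η f : (Fin d → ℝ) → ℝ) : ℝ :=
  ∫ x, (η x * logLoss (f x) + (1 - η x) * logLoss (-f x)) ∂Q

/-- The infimum of the logistic risk over all Borel measurable real-valued functions. -/
def infLogRisk (d : ℕ) (Q : Measure (Fin d → ℝ)) (η : (Fin d → ℝ) → ℝ) : ℝ :=
  sInf {t | ∃ g : (Fin d → ℝ) → ℝ, Measurable g ∧ t = logRisk d Q η g}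

/-- The excess logistic risk `E^φ_{η,Q}(f)`. -/
def excessLogRisk (d : ℕ) (Q : Measure (Fin d → ℝ)) (η f : (Fin d → ℝ) → ℝ) : ℝ :=
  logRisk d Q η f - infLogRisk d Q η

/-- The misclassification risk `R_{η,Q}(f)`; note `1{sgn(f x) = -1} = 1{f x < 0}` and
`1{sgn(f x) = 1} = 1{0 ≤ f x}`. -/
def misRisk (d : ℕ) (Q : Measure (Fin d → ℝ)) (η f : (Fin d → ℝ) → ℝ) : ℝ :=
  ∫ x, (η x * (if f x < 0 then (1 : ℝ) else 0)
      + (1 - η x) * (if 0 ≤ f x then (1 : ℝ) else 0)) ∂Q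

/-- The infimum of the misclassification risk over all Borel measurable functions. -/
def infMisRisk (d : ℕ) (Q : Measure (Fin d → ℝ)) (η : (Fin d → ℝ) → ℝ) : ℝ :=
  sInf {t | ∃ g : (Fin d → ℝ) → ℝ, Measurable g ∧ t = misRisk d Q η g}

/-- The excess misclassification error `E_{η,Q}(f)`. -/
def excessMisRisk (d : ℕ) (Q : Measure (Fin d → ℝ)) (η f : (Fin d → ℝ) → ℝ) : ℝ :=
  misRisk d Q η f - infMisRisk d Q η

/-- The joint distribution `P_{η,Q}` on `ℝ^d × ℝ`: the marginal on the first factor is `Q`,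
and the conditional distribution of the label given `x` puts mass `η x` on `1` and mass
`1 - η x` on `-1`.  It satisfies `P_{η,Q}(S) = ∫ (η x • 1_S(x,1) + (1 - η x) • 1_S(x,-1)) dQ`. -/
def PeQ (d : ℕ) (Q : Measure (Fin d → ℝ)) (η : (Fin d → ℝ) → ℝ) :
    Measure ((Fin d → ℝ) × ℝ) :=
  (Q.withDensity fun x => ENNReal.ofReal (η x)).map (fun x => (x, (1 : ℝ)))
    + (Q.withDensity fun x => ENNReal.ofReal (1 - η x)).map (fun x => (x, (-1 : ℝ)))

/-- The logistic risk `R^φ_P(f)` with respect to a joint distribution `P` on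
`[0,1]^d × {-1,1}`. -/
def jointLogRisk (d : ℕ) (P : Measure ((Fin d → ℝ) × ℝ)) (f : (Fin d → ℝ) → ℝ) : ℝ :=
  ∫ z, logLoss (z.2 * f z.1) ∂P

/-- The Lebesgue measure on the cube `[0,1]^d`. -/
def cubeVolume (d : ℕ) : Measure (Fin d → ℝ) := volume.restrict (cube d)

/-- The `n`-fold product measure `P^{⊗n}` on the sample space. -/
def nSample (d n : ℕ) (P : Measure ((Fin d → ℝ) × ℝ)) :
    Measure (Fin n → (Fin d → ℝ) × ℝ) :=
  Measure.pi fun _ => P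

/-- `fhat` is an empirical logistic-risk minimizer over the class `Fcls` from samples of
size `n`: it is jointly Borel measurable, and for every sample
`z ∈ ([0,1]^d × {-1,1})^n` the function `fhat z` belongs to `Fcls` and minimizes the
empirical logistic risk over `Fcls`. -/
def IsERM (d n : ℕ) (Fcls : Set ((Fin d → ℝ) → ℝ))
    (fhat : (Fin n → (Fin d → ℝ) × ℝ) → (Fin d → ℝ) → ℝ) : Prop :=
  Measurable (fun p : (Fin n → (Fin d → ℝ) × ℝ) × (Fin d → ℝ) => fhat p.1 p.2) ∧
  ∀ z : Fin n → (Fin d → ℝ) × ℝ, (∀ i, z i ∈ (cube d) ×ˢ ({-1, 1} : Set ℝ)) →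
    fhat z ∈ Fcls ∧
    ∀ f ∈ Fcls,
      ∑ i, logLoss ((z i).2 * fhat z ((z i).1)) ≤ ∑ i, logLoss ((z i).2 * f ((z i).1))

/-- The successive hidden layers of a fully connected ReLU network:
`u₀ = x` and `u_{k+1} = σ_{v_{k+1}}(W_k u_k)`. -/
def fnnHidden (m : ℕ → ℕ) (W : ∀ k : ℕ, Matrix (Fin (m (k + 1))) (Fin (m k)) ℝ)
    (v : ∀ k : ℕ, Fin (m k) → ℝ) : (k : ℕ) → (Fin (m 0) → ℝ) → (Fin (m k) → ℝ)
  | 0 => fun x => x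
  | (k + 1) => fun x j => max ((W k).mulVec (fnnHidden m W v k x) j - v (k + 1) j) 0

/-- `f ∈ F^FNN_d(G, N, S, B, F)`: `f : ℝ^d → ℝ` is realized by a fully connected ReLU
network `x ↦ W_L σ_{v_L} W_{L-1} ⋯ W_1 σ_{v_1} W_0 x` with depth `L ≤ G`, hidden widths
at most `N`, at most `S` nonzero entries among all weight matrices and bias vectors, all
entries bounded by `B` in absolute value, and `sup_{x ∈ [0,1]^d} |f x| ≤ F`. -/
def IsFNN (d : ℕ) (G N S B : ℝ) (F : ℝ≥0∞) (f : (Fin d → ℝ) → ℝ) : Prop :=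
  ∃ (L : ℕ) (m : ℕ → ℕ) (W : ∀ k : ℕ, Matrix (Fin (m (k + 1))) (Fin (m k)) ℝ)
    (v : ∀ k : ℕ, Fin (m k) → ℝ) (hm0 : m 0 = d) (hmL : m (L + 1) = 1),
    1 ≤ L ∧ (L : ℝ) ≤ G ∧
    (∀ k : ℕ, 1 ≤ k → k ≤ L → (m k : ℝ) ≤ N) ∧
    (((∑ k ∈ Finset.range (L + 1),
          Set.ncard {p : Fin (m (k + 1)) × Fin (m k) | W k p.1 p.2 ≠ 0}) +
        (∑ k ∈ Finset.Icc 1 L, Set.ncard {j : Fin (m k) | v k j ≠ 0}) : ℝ) ≤ S) ∧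
    (∀ k : ℕ, k ≤ L → ∀ i j, |W k i j| ≤ B) ∧
    (∀ k : ℕ, 1 ≤ k → k ≤ L → ∀ j, |v k j| ≤ B) ∧
    (∀ x ∈ cube d, ENNReal.ofReal |f x| ≤ F) ∧
    (∀ x : Fin d → ℝ,
      f x = (W L).mulVec (fnnHidden m W v L fun i => x (Fin.cast hm0 i)) (Fin.cast hmL.symm 0))

/-- The partial derivative (within the cube) of `f` in the `i`-th coordinate direction. -/
def pderivW (m : ℕ) (i : Fin m) (f : (Fin m → ℝ) → ℝ) : (Fin m → ℝ) → ℝ :=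
  fun x => fderivWithin ℝ f (cube m) x (Pi.single i 1)

/-- The iterated partial derivative of `f` along the list of coordinate directions `l`. -/
def derivListW (m : ℕ) : List (Fin m) → ((Fin m → ℝ) → ℝ) → ((Fin m → ℝ) → ℝ)
  | [], f => f
  | (i :: l), f => derivListW m l (pderivW m i f)

/-- Membership in the Hölder ball `B^β_r([0,1]^m)`: with `k = ⌈β⌉ - 1` and
`λ = β - ⌈β⌉ + 1`, `f` has continuous partial derivatives (within the cube) up to order
`k`, and the maximum of the sup-norms of its derivatives of order at most `k` plus the
maximum of the Hölder-`λ` seminorms of its derivatives of order `k` is at most `r`. -/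
def MemHolderBall (m : ℕ) (β r : ℝ) (f : (Fin m → ℝ) → ℝ) : Prop :=
  (∀ l : List (Fin m), l.length < ⌈β⌉₊ - 1 →
    DifferentiableOn ℝ (derivListW m l f) (cube m)) ∧
  (∀ l : List (Fin m), l.length ≤ ⌈β⌉₊ - 1 →
    ContinuousOn (derivListW m l f) (cube m)) ∧
  ∃ A Bc : ℝ, A + Bc ≤ r ∧
    (∀ l : List (Fin m), l.length ≤ ⌈β⌉₊ - 1 → ∀ x ∈ cube m, |derivListW m l f x| ≤ A) ∧
    (∀ l : List (Fin m), l.length = ⌈β⌉₊ - 1 → ∀ x ∈ cube m, ∀ z ∈ cube m, x ≠ z →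
      |derivListW m l f x - derivListW m l f z| ≤ Bc * eucDist x z ^ (β - (⌈β⌉₊ : ℝ) + 1))

/-- `f ∈ G^M_d(dmax)`: on `[0,1]^d`, `f` computes the maximum of at most `dmax` of its
input coordinates. -/
def GM (d dmax : ℕ) (f : (Fin d → ℝ) → ℝ) : Prop :=
  ∃ (I : Finset (Fin d)) (hI : I.Nonempty), I.card ≤ dmax ∧
    ∀ x ∈ cube d, f x = I.sup' hI fun i => x i

/-- `f ∈ G^H_d(dstar, β, r)`: on `[0,1]^d`, `f` depends on exactly `dstar` of its input
coordinates, through a function in the Hölder ball `B^β_r([0,1]^{dstar})`. -/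
def GH (d dstar : ℕ) (β r : ℝ) (f : (Fin d → ℝ) → ℝ) : Prop :=
  ∃ (I : Finset (Fin d)) (hI : I.card = dstar) (g : (Fin dstar → ℝ) → ℝ),
    MemHolderBall dstar β r g ∧
    ∀ x ∈ cube d, f x = g fun j => x ↑(I.orderIsoOfFin hI j)

/-- Iterated composition `h_{n-1} ∘ ⋯ ∘ h_1 ∘ h_0` of a chain of maps with varying
dimensions `D : ℕ → ℕ`. -/
def depChain (D : ℕ → ℕ) (h : ∀ i : ℕ, (Fin (D i) → ℝ) → (Fin (D (i + 1)) → ℝ)) :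
    (n : ℕ) → (Fin (D 0) → ℝ) → (Fin (D n) → ℝ)
  | 0 => fun x => x
  | (n + 1) => fun x => h n (depChain D h n x)

/-- `f ∈ G^CHOM_d(q, K, dmax, dstar, β, r)`: on `[0,1]^d`, `f` is a composition
`h_q ∘ ⋯ ∘ h_0` where `h_0 : [0,1]^d → [0,1]^K`, `h_i : [0,1]^K → [0,1]^K` for
`0 < i < q`, `h_q : [0,1]^{d or K} → ℝ`, and each coordinate function of each `h_i`
belongs to `G^H(dstar, β, r) ∪ G^M(dmax)`. -/
def GCHOM (q d dmax dstar K : ℕ) (β r : ℝ) (f : (Fin d → ℝ) → ℝ) : Prop :=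
  ∃ (D : ℕ → ℕ) (h : ∀ i : ℕ, (Fin (D i) → ℝ) → (Fin (D (i + 1)) → ℝ))
    (hD0 : D 0 = d) (hDq : D (q + 1) = 1),
    (∀ i : ℕ, 1 ≤ i → i ≤ q → D i = K) ∧
    (∀ i : ℕ, i ≤ q → ∀ j : Fin (D (i + 1)),
      GH (D i) dstar β r (fun x => h i x j) ∨ GM (D i) dmax (fun x => h i x j)) ∧
    (∀ i : ℕ, i < q → ∀ x ∈ cube (D i), h i x ∈ cube (D (i + 1))) ∧
    (∀ x ∈ cube d,
      f x = depChain D h (q + 1) (fun i => x (Fin.cast hD0 i)) (Fin.cast hDq.symm 0))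

/-- `f ∈ G^CH_d(q, K, dstar, β, r)`: as `G^CHOM`, but every coordinate function belongs
to `G^H(dstar, β, r)`. -/
def GCH (q d dstar K : ℕ) (β r : ℝ) (f : (Fin d → ℝ) → ℝ) : Prop :=
  ∃ (D : ℕ → ℕ) (h : ∀ i : ℕ, (Fin (D i) → ℝ) → (Fin (D (i + 1)) → ℝ))
    (hD0 : D 0 = d) (hDq : D (q + 1) = 1),
    (∀ i : ℕ, 1 ≤ i → i ≤ q → D i = K) ∧
    (∀ i : ℕ, i ≤ q → ∀ j : Fin (D (i + 1)), GH (D i) dstar β r (fun x => h i x j)) ∧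
    (∀ i : ℕ, i < q → ∀ x ∈ cube (D i), h i x ∈ cube (D (i + 1))) ∧
    (∀ x ∈ cube d,
      f x = depChain D h (q + 1) (fun i => x (Fin.cast hD0 i)) (Fin.cast hDq.symm 0))

/-- The sup-norm over the cube of the (componentwise) difference of two vector-valued
functions. -/
def supDiffVec (m k : ℕ) (g g' : (Fin m → ℝ) → (Fin k → ℝ)) : ℝ :=
  sSup {t | ∃ x ∈ cube m, ∃ j : Fin k, t = |g x j - g' x j|}

/-- The binary entropy function `H`. -/
def entH (t : ℝ) : ℝ :=
  if t = 0 ∨ t = 1 then 0 else t * Real.log (1 / t) + (1 - t) * Real.log (1 / (1 - t))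

/-- `sup { 1/(2(2 + e^t + e^{-t})) : min u v ≤ t ≤ max u v }`. -/
def wSup (u v : ℝ) : ℝ :=
  sSup {s | ∃ t ∈ Set.Icc (min u v) (max u v), s = 1 / (2 * (2 + Real.exp t + Real.exp (-t)))}

/-- The function `J` of Statement 19. -/
def Jfun (x y : ℝ) : ℝ :=
  (x + y) * Real.log (2 / (x + y)) + (2 - x - y) * Real.log (2 / (2 - x - y))
    - (x * Real.log (1 / x) + (1 - x) * Real.log (1 / (1 - x))
        + y * Real.log (1 / y) + (1 - y) * Real.log (1 / (1 - y)))

/-- The grid `G_{Q,d}` of points of `[0,1]^d` whose coordinates are odd multiples of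
`1/(2Q)`. -/
def oddGrid (d Qn : ℕ) : Set (Fin d → ℝ) :=
  {a | a ∈ cube d ∧ ∀ i, ∃ k : ℤ, Odd k ∧ a i = (k : ℝ) / (2 * (Qn : ℝ))}

end

end DNNLogistic

open ProbabilityTheory Real

lemma MeasureTheory.Integrable.finset_sup' {Ω ι : Type*} [MeasurableSpace Ω] {μ : Measure Ω}
    {s : Finset ι} (hs : s.Nonempty) {X : ι → Ω → ℝ} (hX : ∀ j ∈ s, Integrable (X j) μ) :
    Integrable (fun ω => s.sup' hs fun j => X j ω) μ := by
  simpa only [← Finset.sup'_apply] using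
    Finset.sup'_induction (p := (Integrable · μ)) hs X (fun _ h₁ _ h₂ => h₁.sup h₂) hX

/-- Jensen's inequality for `exp`, then a union bound over the `exp (l * X j)`. -/
lemma integral_sup'_le_log_card_div {Ω ι : Type*} [MeasurableSpace Ω] {μ : Measure Ω}
    [IsProbabilityMeasure μ] [Fintype ι] [Nonempty ι] {X : ι → Ω → ℝ} {l : ℝ} (hl : 0 < l)
    (hX : ∀ j, Integrable (X j) μ) (hexp : ∀ j, Integrable (fun ω => exp (l * X j ω)) μ)
    (hmgf : ∀ j, mgf (X j) μ l ≤ 1) :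
    ∫ ω, Finset.univ.sup' Finset.univ_nonempty (fun j => X j ω) ∂μ
      ≤ log (Fintype.card ι) / l := by
  set Xmax := fun ω => Finset.univ.sup' Finset.univ_nonempty (fun j => X j ω)
  have hXmax : Integrable Xmax μ := Integrable.finset_sup' _ fun j _ => hX j
  have hsum : Integrable (fun ω => ∑ j, exp (l * X j ω)) μ :=
    integrable_finsetSum _ fun j _ => hexp j
  have hpointwise : ∀ ω, exp (l * Xmax ω) ≤ ∑ j, exp (l * X j ω) := fun ω => by
    obtain ⟨j, -, hj⟩ := Finset.exists_mem_eq_sup' Finset.univ_nonempty (fun j => X j ω)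
    rw [show Xmax ω = X j ω from hj]
    exact Finset.single_le_sum (f := fun j => exp (l * X j ω))
      (fun _ _ => (exp_pos _).le) (Finset.mem_univ j)
  have hexp_max : Integrable (fun ω => exp (l * Xmax ω)) μ :=
    hsum.mono' (continuous_exp.comp_aestronglyMeasurable
      (hXmax.aestronglyMeasurable.const_mul l)) (.of_forall fun ω => by
        rw [norm_eq_abs, abs_exp]; exact hpointwise ω)
  have hjensen : exp (l * ∫ ω, Xmax ω ∂μ) ≤ ∫ ω, exp (l * Xmax ω) ∂μ := by
    rw [← integral_const_mul]
    exact convexOn_exp.map_integral_le continuous_exp.continuousOn isClosed_univ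
      (.of_forall fun _ => Set.mem_univ _) (hXmax.const_mul l) hexp_max
  have hunion : ∫ ω, exp (l * Xmax ω) ∂μ ≤ Fintype.card ι := by
    calc ∫ ω, exp (l * Xmax ω) ∂μ ≤ ∫ ω, ∑ j, exp (l * X j ω) ∂μ :=
          integral_mono hexp_max hsum hpointwise
      _ = ∑ j, mgf (X j) μ l := integral_finsetSum _ fun j _ => hexp j
      _ ≤ Fintype.card ι := by
          simpa using Finset.sum_le_sum fun j (_ : j ∈ Finset.univ) => hmgf j
  rw [le_div_iff₀ hl, mul_comm, le_log_iff_exp_le (by exact_mod_cast Fintype.card_pos)]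
  exact hjensen.trans hunion

section Deviation

variable {α : Type*} [MeasurableSpace α] {n : ℕ}

noncomputable def sampleDeviation (P : Measure α) (ε : ℝ) (X : α → ℝ) (z : Fin n → α) : ℝ :=
  ∫ w, X w ∂P - (1 + ε) / n * ∑ i, X (z i)

variable {P : Measure α}

lemma measurable_sampleDeviation {X : α → ℝ} (hX : Measurable X) (ε : ℝ) :
    Measurable (sampleDeviation P ε X (n := n)) := by
  unfold sampleDeviation
  fun_prop

variable [IsProbabilityMeasure P]

lemma ae_pi_forall_of_ae {p : α → Prop} (h : ∀ᵐ w ∂P, p w) :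
    ∀ᵐ z ∂(Measure.pi fun _ : Fin n => P), ∀ i, p (z i) :=
  ae_all_iff.2 fun _ => Measure.tendsto_eval_ae_ae.eventually h

lemma integrable_sampleDeviation {X : α → ℝ} (hX : Integrable X P) (ε : ℝ) :
    Integrable (sampleDeviation P ε X (n := n)) (Measure.pi fun _ => P) :=
  (integrable_const _).sub
    ((integrable_finsetSum _ fun i _ => integrable_comp_eval (i := i) hX).const_mul _)

lemma abs_sampleDeviation_le {X : α → ℝ} {b ε : ℝ} (hn : 0 < n) (hε : 0 ≤ ε)
    (hXb : ∀ᵐ w ∂P, |X w| ≤ b) {z : Fin n → α} (hz : ∀ i, |X (z i)| ≤ b) :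
    |sampleDeviation P ε X z| ≤ (2 + ε) * b := by
  have hmean : |∫ w, X w ∂P| ≤ b := by
    simpa using norm_integral_le_of_norm_le_const (f := X) (hXb.mono fun w hw => by
      rwa [Real.norm_eq_abs])
  have hsum : |(1 + ε) / n * ∑ i, X (z i)| ≤ (1 + ε) * b := by
    rw [abs_mul, abs_of_nonneg (by positivity)]
    calc (1 + ε) / n * |∑ i, X (z i)| ≤ (1 + ε) / n * (n * b) := by
          gcongr
          calc |∑ i, X (z i)| ≤ ∑ i, |X (z i)| := Finset.abs_sum_le_sum_abs _ _
            _ ≤ ∑ _i : Fin n, b := Finset.sum_le_sum fun i _ => hz i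
            _ = n * b := by simp
      _ = (1 + ε) * b := by field_simp
  calc |sampleDeviation P ε X z| ≤ |∫ w, X w ∂P| + |(1 + ε) / n * ∑ i, X (z i)| := abs_sub _ _
    _ ≤ (2 + ε) * b := by linarith

/-- A one-sided Bernstein bound, from `exp (-u) ≤ 1 - u + u ^ 2` for `|u| ≤ 1`. -/
lemma mgf_neg_le_of_sq_le {X : α → ℝ} {b Γ t : ℝ} (hX : AEStronglyMeasurable X P)
    (hXb : ∀ᵐ w ∂P, |X w| ≤ b) (hvar : ∫ w, X w ^ 2 ∂P ≤ Γ * ∫ w, X w ∂P)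
    (ht : 0 ≤ t) (htb : t * b ≤ 1) :
    mgf X P (-t) ≤ exp (t * (t * Γ - 1) * ∫ w, X w ∂P) := by
  have hXi : Integrable X P := .of_bound hX b (by simpa using hXb)
  have hX2i : Integrable (fun w => X w ^ 2) P :=
    .of_bound (hX.pow 2) (b ^ 2) (hXb.mono fun w hw => by
      simpa using pow_le_pow_left₀ (abs_nonneg _) hw 2)
  have hquad : ∀ᵐ w ∂P, exp (-t * X w) ≤ 1 - t * X w + t ^ 2 * X w ^ 2 := by
    filter_upwards [hXb] with w hw
    have hu : |-t * X w| ≤ 1 := by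
      rw [abs_mul, abs_neg, abs_of_nonneg ht]
      exact (mul_le_mul_of_nonneg_left hw ht).trans htb
    have := (abs_le.1 (abs_exp_sub_one_sub_id_le hu)).2
    nlinarith
  have hlin : Integrable (fun w => 1 - t * X w) P := (integrable_const 1).sub (hXi.const_mul t)
  calc mgf X P (-t) ≤ ∫ w, (1 - t * X w + t ^ 2 * X w ^ 2) ∂P :=
        integral_mono_of_nonneg (.of_forall fun _ => (exp_pos _).le)
          (hlin.add (hX2i.const_mul _)) hquad
    _ = 1 - t * ∫ w, X w ∂P + t ^ 2 * ∫ w, X w ^ 2 ∂P := by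
        rw [integral_add hlin (hX2i.const_mul _), integral_sub (integrable_const 1)
          (hXi.const_mul t), integral_const_mul, integral_const_mul]
        simp
    _ ≤ t * (t * Γ - 1) * ∫ w, X w ∂P + 1 := by nlinarith [sq_nonneg t]
    _ ≤ exp (t * (t * Γ - 1) * ∫ w, X w ∂P) := add_one_le_exp _

lemma mgf_sampleDeviation_le_one {X : α → ℝ} {b Γ ε l : ℝ} (hn : 0 < n)
    (hX : Measurable X) (hXb : ∀ᵐ w ∂P, |X w| ≤ b)
    (hvar : ∫ w, X w ^ 2 ∂P ≤ Γ * ∫ w, X w ∂P) (hΓ : 0 < Γ) (hε : 0 ≤ ε) (hl : 0 ≤ l)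
    (hlb : l * ((1 + ε) * b) ≤ n) (hlΓ : l * ((1 + ε) ^ 2 * Γ) ≤ ε * n) :
    mgf (sampleDeviation P ε X) (Measure.pi fun _ : Fin n => P) l ≤ 1 := by
  have hn' : (0 : ℝ) < n := Nat.cast_pos.2 hn
  set μX := ∫ w, X w ∂P
  have hμX : 0 ≤ μX := nonneg_of_mul_nonneg_right
    ((integral_nonneg fun w => sq_nonneg (X w)).trans hvar) hΓ
  -- `exp (l * sampleDeviation)` factorizes over the sample, each factor with exponent `-t`
  set t := l * (1 + ε) / n
  have ht : 0 ≤ t := by positivity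
  have htb : t * b ≤ 1 := by
    rw [div_mul_eq_mul_div, div_le_one hn']; linarith
  have htΓ : (1 + ε) * t * Γ ≤ ε := by
    rw [show (1 + ε) * t * Γ = l * ((1 + ε) ^ 2 * Γ) / n by ring, div_le_iff₀ hn']; exact hlΓ
  have hfactor : ∀ z : Fin n → α,
      exp (l * sampleDeviation P ε X z) = exp (l * μX) * ∏ i, exp (-t * X (z i)) := by
    intro z
    rw [← exp_sum, ← exp_add, sampleDeviation, ← Finset.mul_sum]
    congr 1
    simp only [t, μX]
    ring
  calc mgf (sampleDeviation P ε X) (Measure.pi fun _ : Fin n => P) l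
      = exp (l * μX) * mgf X P (-t) ^ n := by
        simp only [mgf, hfactor, integral_const_mul]
        rw [integral_fintype_prod_eq_pow (fun w => exp (-t * X w)), Fintype.card_fin]
    _ ≤ exp (l * μX) * exp (t * (t * Γ - 1) * μX) ^ n := by
        gcongr
        · exact mgf_nonneg
        · exact mgf_neg_le_of_sq_le hX.aestronglyMeasurable hXb hvar ht htb
    _ = exp (l * μX * ((1 + ε) * t * Γ - ε)) := by
        rw [← exp_nat_mul, ← exp_add]
        congr 1
        simp only [t]
        field_simp
        ring
    _ ≤ 1 := exp_le_one_iff.2 (mul_nonpos_of_nonneg_of_nonpos (by positivity) (by linarith))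

lemma integral_sup'_sampleDeviation_le {ι : Type*} [Fintype ι] [Nonempty ι] {X : ι → α → ℝ}
    {b Γ ε : ℝ} (hn : 0 < n) (hb : 0 ≤ b) (hΓ : 0 < Γ) (hε : 0 < ε)
    (hX : ∀ j, Measurable (X j)) (hXb : ∀ j, ∀ᵐ w ∂P, |X j w| ≤ b)
    (hvar : ∀ j, ∫ w, X j w ^ 2 ∂P ≤ Γ * ∫ w, X j w ∂P) :
    ∫ z, Finset.univ.sup' Finset.univ_nonempty (fun j => sampleDeviation P ε (X j) z)
        ∂(Measure.pi fun _ : Fin n => P)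
      ≤ ((1 + ε) * b + (1 + ε) ^ 2 / ε * Γ) * log (Fintype.card ι) / n := by
  have hn' : (0 : ℝ) < n := Nat.cast_pos.2 hn
  set K := (1 + ε) * b + (1 + ε) ^ 2 / ε * Γ
  have hK : 0 < K := by positivity
  -- `l = n / K` meets both constraints of `mgf_sampleDeviation_le_one`
  have hlb : n / K * ((1 + ε) * b) ≤ n := by
    rw [div_mul_eq_mul_div, div_le_iff₀ hK]
    exact mul_le_mul_of_nonneg_left (le_add_of_nonneg_right (by positivity)) hn'.le
  have hlΓ : n / K * ((1 + ε) ^ 2 * Γ) ≤ ε * n := by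
    have hεK : ε * K = ε * ((1 + ε) * b) + (1 + ε) ^ 2 * Γ := by
      simp only [K]
      field_simp
    rw [div_mul_eq_mul_div, div_le_iff₀ hK]
    nlinarith [mul_nonneg hε.le (mul_nonneg (by positivity : (0 : ℝ) ≤ 1 + ε) hb)]
  have hint : ∀ j, Integrable (X j) P := fun j =>
    .of_bound (hX j).aestronglyMeasurable b (by simpa using hXb j)
  have hexp : ∀ j, Integrable (fun z => exp (n / K * sampleDeviation P ε (X j) z))
      (Measure.pi fun _ : Fin n => P) := fun j =>
    .of_bound ((measurable_sampleDeviation (hX j) ε).const_mul _).exp.aestronglyMeasurable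
      (exp (n / K * ((2 + ε) * b))) ((ae_pi_forall_of_ae (hXb j)).mono fun z hz => by
        rw [norm_eq_abs, abs_exp]
        gcongr
        exact (le_abs_self _).trans (abs_sampleDeviation_le hn hε.le (hXb j) hz))
  calc _ ≤ log (Fintype.card ι) / (n / K) :=
        integral_sup'_le_log_card_div (by positivity)
          (fun j => integrable_sampleDeviation (hint j) ε) hexp
          (fun j => mgf_sampleDeviation_le_one hn (hX j) (hXb j) (hvar j) hΓ hε.le
            (by positivity) hlb hlΓ)
    _ = K * log (Fintype.card ι) / n := by field_simp

end Deviation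

section ERM

variable {α : Type*} [MeasurableSpace α] {P : Measure α} [IsProbabilityMeasure P] {n : ℕ}

lemma integral_le_sampleDeviation_add {g g' g₀ : α → ℝ} {S : Set α} {γ ε : ℝ} (hn : 0 < n)
    (hε : 0 ≤ ε) (hS : ∀ᵐ w ∂P, w ∈ S) (hg : Integrable g P) (hg' : Integrable g' P)
    (hclose : ∀ w ∈ S, |g w - g' w| ≤ γ) {z : Fin n → α} (hz : ∀ i, z i ∈ S)
    (hmin : ∑ i, g (z i) ≤ ∑ i, g₀ (z i)) :
    ∫ w, g w ∂P ≤ sampleDeviation P ε g' z + (1 + ε) / n * ∑ i, g₀ (z i) + (2 + ε) * γ := by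
  have hmean : ∫ w, g w ∂P ≤ ∫ w, g' w ∂P + γ := by
    calc ∫ w, g w ∂P ≤ ∫ w, (g' w + γ) ∂P :=
          integral_mono_ae hg (hg'.add (integrable_const γ)) (hS.mono fun w hw => by
            linarith [(abs_le.1 (hclose w hw)).2])
      _ = ∫ w, g' w ∂P + γ := by simp [integral_add hg' (integrable_const γ)]
  have hsample : ∑ i, g' (z i) ≤ ∑ i, g₀ (z i) + n * γ := by
    calc ∑ i, g' (z i) ≤ ∑ i, (g (z i) + γ) :=
          Finset.sum_le_sum fun i _ => by linarith [(abs_le.1 (hclose _ (hz i))).1]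
      _ ≤ ∑ i, g₀ (z i) + n * γ := by simpa [Finset.sum_add_distrib] using hmin
  have hscaled : (1 + ε) / n * ∑ i, g' (z i) ≤ (1 + ε) / n * ∑ i, g₀ (z i) + (1 + ε) * γ := by
    calc (1 + ε) / n * ∑ i, g' (z i) ≤ (1 + ε) / n * (∑ i, g₀ (z i) + n * γ) := by gcongr
      _ = (1 + ε) / n * ∑ i, g₀ (z i) + (1 + ε) * γ := by field_simp
  unfold sampleDeviation
  linarith

theorem integral_integral_erm_le {ι : Type*} {ℓ : ι → α → ℝ} {F : Set ι} {S : Set α}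
    {W : ℕ} [NeZero W] {b Γ γ ε : ℝ} (hn : 0 < n) (hb : 0 ≤ b) (hΓ : 0 < Γ) (hε : 0 < ε)
    (hS : ∀ᵐ w ∂P, w ∈ S) (hmeas : ∀ f ∈ F, Measurable (ℓ f))
    (hbdd : ∀ f ∈ F, ∀ w ∈ S, |ℓ f w| ≤ b)
    (hvar : ∀ f ∈ F, ∫ w, ℓ f w ^ 2 ∂P ≤ Γ * ∫ w, ℓ f w ∂P)
    (fs : Fin W → ι) (hfs : ∀ j, fs j ∈ F)
    (hnet : ∀ f ∈ F, ∃ j, ∀ w ∈ S, |ℓ f w - ℓ (fs j) w| ≤ γ)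
    (fhat : (Fin n → α) → ι) (hfhat : Measurable fun p : (Fin n → α) × α => ℓ (fhat p.1) p.2)
    (herm : ∀ z : Fin n → α, (∀ i, z i ∈ S) →
      fhat z ∈ F ∧ ∀ f ∈ F, ∑ i, ℓ (fhat z) (z i) ≤ ∑ i, ℓ f (z i))
    {f₀ : ι} (hf₀ : f₀ ∈ F) :
    ∫ z, (∫ w, ℓ (fhat z) w ∂P) ∂(Measure.pi fun _ : Fin n => P)
      ≤ ((1 + ε) * b + (1 + ε) ^ 2 / ε * Γ) * log W / n + (2 + ε) * γ
        + (1 + ε) * ∫ w, ℓ f₀ w ∂P := by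
  set Pn := Measure.pi fun _ : Fin n => P
  have hSn : ∀ᵐ z ∂Pn, ∀ i, z i ∈ S := ae_pi_forall_of_ae hS
  have hbdd_ae : ∀ f ∈ F, ∀ᵐ w ∂P, |ℓ f w| ≤ b := fun f hf =>
    hS.mono fun w hw => hbdd f hf w hw
  have hint : ∀ f ∈ F, Integrable (ℓ f) P := fun f hf =>
    .of_bound (hmeas f hf).aestronglyMeasurable b (by simpa using hbdd_ae f hf)
  set dev := fun z => Finset.univ.sup' Finset.univ_nonempty
    (fun j => sampleDeviation P ε (ℓ (fs j)) z)
  have hdev : ∫ z, dev z ∂Pn ≤ ((1 + ε) * b + (1 + ε) ^ 2 / ε * Γ) * log W / n := by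
    simpa using integral_sup'_sampleDeviation_le hn hb hΓ hε (fun j => hmeas _ (hfs j))
      (fun j => hbdd_ae _ (hfs j)) (fun j => hvar _ (hfs j))
  have hpointwise : ∀ᵐ z ∂Pn, ∫ w, ℓ (fhat z) w ∂P
      ≤ dev z + (1 + ε) / n * ∑ i, ℓ f₀ (z i) + (2 + ε) * γ := by
    filter_upwards [hSn] with z hz
    obtain ⟨hfz, hmin⟩ := herm z hz
    obtain ⟨j, hj⟩ := hnet _ hfz
    refine (integral_le_sampleDeviation_add hn hε.le hS (hint _ hfz) (hint _ (hfs j)) hj hz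
      (hmin f₀ hf₀)).trans ?_
    gcongr
    exact Finset.le_sup' (fun j => sampleDeviation P ε (ℓ (fs j)) z) (Finset.mem_univ j)
  have hrisk : Integrable (fun z => ∫ w, ℓ (fhat z) w ∂P) Pn :=
    .of_bound hfhat.stronglyMeasurable.integral_prod_right'.aestronglyMeasurable b
      (hSn.mono fun z hz => by
        simpa using norm_integral_le_of_norm_le_const (f := ℓ (fhat z))
          ((hbdd_ae _ (herm z hz).1).mono fun w hw => by rwa [Real.norm_eq_abs]))
  have hdev_int : Integrable dev Pn :=
    Integrable.finset_sup' _ fun j _ => integrable_sampleDeviation (hint _ (hfs j)) ε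
  have hsum_int : ∀ i, Integrable (fun z : Fin n → α => ℓ f₀ (z i)) Pn := fun i =>
    integrable_comp_eval (hint f₀ hf₀)
  have hlin : Integrable (fun z => dev z + (1 + ε) / n * ∑ i, ℓ f₀ (z i)) Pn :=
    hdev_int.add ((integrable_finsetSum _ fun i _ => hsum_int i).const_mul _)
  calc ∫ z, (∫ w, ℓ (fhat z) w ∂P) ∂Pn
      ≤ ∫ z, (dev z + (1 + ε) / n * ∑ i, ℓ f₀ (z i) + (2 + ε) * γ) ∂Pn :=
        integral_mono_ae hrisk (hlin.add (integrable_const _)) hpointwise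
    _ = ∫ z, dev z ∂Pn + (1 + ε) * ∫ w, ℓ f₀ w ∂P + (2 + ε) * γ := by
        rw [integral_add hlin (integrable_const _), integral_add hdev_int
          ((integrable_finsetSum _ fun i _ => hsum_int i).const_mul _), integral_const_mul,
          integral_finsetSum _ fun i _ => hsum_int i]
        rw [Finset.sum_congr rfl fun i _ => integral_comp_eval (μ := fun _ : Fin n => P) (i := i)
          (hint f₀ hf₀).aestronglyMeasurable]
        simp
        field_simp
    _ ≤ _ := by linarith

end ERM

lemma le_add_mul_sInf_of_forall_le {ι : Type*} {s : Set ι} (hs : s.Nonempty) {r : ι → ℝ}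
    {a c e : ℝ} (hc : 0 < c) (h : ∀ f ∈ s, a ≤ e + c * r f) :
    a ≤ e + c * sInf {t | ∃ f ∈ s, t = r f} := by
  obtain ⟨f, hf⟩ := hs
  have hlb : (a - e) / c ≤ sInf {t | ∃ f ∈ s, t = r f} :=
    le_csInf ⟨r f, f, hf, rfl⟩ fun t ⟨f, hf, ht⟩ => by
      rw [ht, div_le_iff₀' hc]; linarith [h f hf]
  rw [div_le_iff₀' hc] at hlb
  linarith

namespace DNNLogistic

noncomputable section

lemma measurableSet_cube (d : ℕ) : MeasurableSet (cube d) := by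
  simpa [cube, Set.pi] using
    MeasurableSet.univ_pi fun _ : Fin d => measurableSet_Icc (a := (0 : ℝ)) (b := 1)

@[fun_prop]
lemma measurable_logLoss : Measurable logLoss := by
  unfold logLoss
  fun_prop

lemma logLoss_nonneg (t : ℝ) : 0 ≤ logLoss t :=
  log_nonneg (by linarith [exp_pos (-t)])

lemma logLoss_antitone : Antitone logLoss := fun a b h =>
  log_le_log (by positivity) (by linarith [exp_le_exp.2 (neg_le_neg h)])

lemma logLoss_le_add_sub {a b : ℝ} (h : a ≤ b) : logLoss a ≤ logLoss b + (b - a) := by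
  have hexp : 1 + exp (-a) ≤ exp (b - a) * (1 + exp (-b)) := by
    rw [mul_add, mul_one, ← exp_add, show b - a + -b = -a by ring]
    linarith [one_le_exp (sub_nonneg.2 h)]
  calc logLoss a ≤ log (exp (b - a) * (1 + exp (-b))) := log_le_log (by positivity) hexp
    _ = logLoss b + (b - a) := by
        rw [log_mul (by positivity) (by positivity), log_exp, logLoss, add_comm]

lemma abs_logLoss_sub_le (a b : ℝ) : |logLoss a - logLoss b| ≤ |a - b| := by
  wlog h : a ≤ b generalizing a b
  · rw [abs_sub_comm, abs_sub_comm a]; exact this b a (le_of_not_ge h)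
  rw [abs_of_nonneg (sub_nonneg.2 (logLoss_antitone h)), abs_of_nonpos (sub_nonpos.2 h)]
  linarith [logLoss_le_add_sub h]

lemma abs_eq_one_of_mem_pair {y : ℝ} (hy : y ∈ ({-1, 1} : Set ℝ)) : |y| = 1 := by
  rcases hy with rfl | rfl <;> simp

variable {d : ℕ}

def excessLoss (ψ : (Fin d → ℝ) × ℝ → ℝ) (f : (Fin d → ℝ) → ℝ) (w : (Fin d → ℝ) × ℝ) : ℝ :=
  logLoss (w.2 * f w.1) - ψ w

lemma measurable_excessLoss {ψ : (Fin d → ℝ) × ℝ → ℝ} {f : (Fin d → ℝ) → ℝ}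
    (hψ : Measurable ψ) (hf : Measurable f) : Measurable (excessLoss ψ f) := by
  unfold excessLoss
  fun_prop

lemma abs_excessLoss_sub_le (ψ : (Fin d → ℝ) × ℝ → ℝ) (f g : (Fin d → ℝ) → ℝ)
    {w : (Fin d → ℝ) × ℝ} (hw : w.2 ∈ ({-1, 1} : Set ℝ)) :
    |excessLoss ψ f w - excessLoss ψ g w| ≤ |f w.1 - g w.1| := by
  simpa [excessLoss, ← mul_sub, abs_mul, abs_eq_one_of_mem_pair hw] using
    abs_logLoss_sub_le (w.2 * f w.1) (w.2 * g w.1)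

lemma abs_excessLoss_le {ψ : (Fin d → ℝ) × ℝ → ℝ} {f : (Fin d → ℝ) → ℝ} {ρ M : ℝ}
    (hφ : ∀ t : ℝ, |t| ≤ ρ → logLoss t ≤ M) {w : (Fin d → ℝ) × ℝ}
    (hw : w.2 ∈ ({-1, 1} : Set ℝ)) (hf : |f w.1| ≤ ρ) (hψ : |ψ w| ≤ M) :
    |excessLoss ψ f w| ≤ 2 * M := by
  have hφw := hφ (w.2 * f w.1) (by rwa [abs_mul, abs_eq_one_of_mem_pair hw, one_mul])
  have := logLoss_nonneg (w.2 * f w.1)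
  rw [excessLoss, abs_le]
  constructor <;> linarith [abs_le.1 hψ]

lemma integral_excessLoss {P : Measure ((Fin d → ℝ) × ℝ)} {ψ : (Fin d → ℝ) × ℝ → ℝ}
    {f : (Fin d → ℝ) → ℝ} (hf : Integrable (excessLoss ψ f) P) (hψ : Integrable ψ P) :
    ∫ w, excessLoss ψ f w ∂P = jointLogRisk d P f - ∫ w, ψ w ∂P := by
  rw [eq_sub_iff_add_eq, ← integral_add hf hψ]
  simp [excessLoss, jointLogRisk]

namespace IsERM

variable {n : ℕ} {F : Set ((Fin d → ℝ) → ℝ)} {fhat : (Fin n → (Fin d → ℝ) × ℝ) → (Fin d → ℝ) → ℝ}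

lemma measurable_excessLoss (h : IsERM d n F fhat) {ψ : (Fin d → ℝ) × ℝ → ℝ}
    (hψ : Measurable ψ) :
    Measurable fun p : (Fin n → (Fin d → ℝ) × ℝ) × ((Fin d → ℝ) × ℝ) =>
      excessLoss ψ (fhat p.1) p.2 := by
  have := h.1
  unfold excessLoss
  fun_prop

lemma sum_excessLoss_le (h : IsERM d n F fhat) (ψ : (Fin d → ℝ) × ℝ → ℝ)
    {z : Fin n → (Fin d → ℝ) × ℝ} (hz : ∀ i, z i ∈ cube d ×ˢ ({-1, 1} : Set ℝ))
    {f : (Fin d → ℝ) → ℝ} (hf : f ∈ F) :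
    ∑ i, excessLoss ψ (fhat z) (z i) ≤ ∑ i, excessLoss ψ f (z i) := by
  simpa [excessLoss, Finset.sum_sub_distrib] using (h.2 z hz).2 f hf

end IsERM

theorem statement0_general (d n : ℕ) (hn : 0 < n)
    (P : Measure ((Fin d → ℝ) × ℝ)) [IsProbabilityMeasure P]
    (hP : P ((cube d) ×ˢ ({-1, 1} : Set ℝ)) = 1)
    (Fcls : Set ((Fin d → ℝ) → ℝ)) (hFne : Fcls.Nonempty)
    (hFmeas : ∀ f ∈ Fcls, Measurable f)
    (ρ : ℝ) (hρbdd : BddAbove {t | ∃ f ∈ Fcls, ∃ x ∈ cube d, t = |f x|})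
    (hρ : ρ = sSup {t | ∃ f ∈ Fcls, ∃ x ∈ cube d, t = |f x|})
    (ψ : (Fin d → ℝ) × ℝ → ℝ) (hψm : Measurable ψ)
    (M Γ γ : ℝ) (hM : 0 < M) (hΓ : 0 < Γ) (hγ : 0 < γ)
    (W : ℕ) (hW : 3 ≤ W)
    (h2a : ∀ t : ℝ, |t| ≤ ρ → logLoss t ≤ M)
    (h2b : ∀ z ∈ (cube d) ×ˢ ({-1, 1} : Set ℝ), |ψ z| ≤ M)
    (h3 : ∀ f ∈ Fcls,
      ∫ z, (logLoss (z.2 * f z.1) - ψ z) ^ 2 ∂P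
        ≤ Γ * ∫ z, (logLoss (z.2 * f z.1) - ψ z) ∂P)
    (h4 : ∃ fs : Fin W → (Fin d → ℝ) → ℝ, (∀ j, fs j ∈ Fcls) ∧
      ∀ f ∈ Fcls, ∃ j, ∀ x ∈ cube d, |f x - fs j x| ≤ γ)
    (fhat : (Fin n → (Fin d → ℝ) × ℝ) → (Fin d → ℝ) → ℝ)
    (hERM : IsERM d n Fcls fhat)
    (ε : ℝ) (hε : ε ∈ Set.Ioo (0 : ℝ) 1) :
    ∫ z, (jointLogRisk d P (fhat z) - ∫ w, ψ w ∂P) ∂(nSample d n P)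
      ≤ 80 * ((1 + ε) ^ 2 / ε) * (Γ * Real.log (W : ℝ) / (n : ℝ))
        + 20 * (1 + ε) * (M * Real.log (W : ℝ) / (n : ℝ))
        + 20 * (1 + ε) * Real.sqrt γ * Real.sqrt (Γ * Real.log (W : ℝ) / (n : ℝ))
        + 4 * γ
        + (1 + ε) * sInf {t | ∃ f ∈ Fcls, t = jointLogRisk d P f - ∫ w, ψ w ∂P} := by
  obtain ⟨hε₀, hε₁⟩ := hε
  obtain ⟨fs, hfs, hnet⟩ := h4
  have : NeZero W := ⟨by omega⟩
  set S := cube d ×ˢ ({-1, 1} : Set ℝ)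
  have hS : ∀ᵐ w ∂P, w ∈ S := (ae_mem_iff_measure_eq
    ((measurableSet_cube d).prod (by simp)).nullMeasurableSet).2 (by rwa [measure_univ])
  have hbdd : ∀ f ∈ Fcls, ∀ w ∈ S, |excessLoss ψ f w| ≤ 2 * M := fun f hf w hw =>
    abs_excessLoss_le h2a hw.2 (hρ ▸ le_csSup hρbdd ⟨f, hf, w.1, hw.1, rfl⟩) (h2b w hw)
  have hψ : Integrable ψ P :=
    .of_bound hψm.aestronglyMeasurable M (hS.mono fun w hw => by simpa using h2b w hw)
  have hrisk : ∀ f ∈ Fcls, ∫ w, excessLoss ψ f w ∂P = jointLogRisk d P f - ∫ w, ψ w ∂P :=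
    fun f hf => integral_excessLoss
      (.of_bound (measurable_excessLoss hψm (hFmeas f hf)).aestronglyMeasurable (2 * M)
        (hS.mono fun w hw => by simpa using hbdd f hf w hw)) hψ
  have horacle : ∀ f ∈ Fcls, ∫ z, (jointLogRisk d P (fhat z) - ∫ w, ψ w ∂P) ∂(nSample d n P)
      ≤ ((1 + ε) * (2 * M) + (1 + ε) ^ 2 / ε * Γ) * log W / n + (2 + ε) * γ
        + (1 + ε) * (jointLogRisk d P f - ∫ w, ψ w ∂P) := fun f hf => by
    rw [← hrisk f hf, nSample, ← integral_congr_ae ((ae_pi_forall_of_ae hS).mono fun z hz =>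
      hrisk _ (hERM.2 z hz).1)]
    exact integral_integral_erm_le hn (by positivity) hΓ hε₀ hS
      (fun f hf => measurable_excessLoss hψm (hFmeas f hf)) hbdd h3 fs hfs
      (fun f hf => (hnet f hf).imp fun j hj w hw =>
        (abs_excessLoss_sub_le ψ f (fs j) hw.2).trans (hj w.1 hw.1))
      fhat (hERM.measurable_excessLoss hψm)
      (fun z hz => ⟨(hERM.2 z hz).1, fun f hf => hERM.sum_excessLoss_le ψ hz hf⟩) hf
  refine (le_add_mul_sInf_of_forall_le hFne (by linarith) horacle).trans ?_
  have hlogW : 0 ≤ log W := log_nonneg (by exact_mod_cast NeZero.one_le)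
  have hsplit : ((1 + ε) * (2 * M) + (1 + ε) ^ 2 / ε * Γ) * log W / n
      = 2 * ((1 + ε) * (M * log W / n)) + (1 + ε) ^ 2 / ε * (Γ * log W / n) := by ring
  have : 0 ≤ (1 + ε) * (M * log W / n) := by positivity
  have : 0 ≤ (1 + ε) ^ 2 / ε * (Γ * log W / n) := by positivity
  have : 0 ≤ 20 * (1 + ε) * √γ * √(Γ * log W / n) := by positivity
  have : (2 + ε) * γ ≤ 4 * γ := by nlinarith
  linarith

/-- Theorem 2.1, oracle inequality for ERM with logistic loss. -/
theorem statement0 (d n : ℕ) (hd : 0 < d) (hn : 0 < n)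
    (P : Measure ((Fin d → ℝ) × ℝ)) [IsProbabilityMeasure P]
    (hP : P ((cube d) ×ˢ ({-1, 1} : Set ℝ)) = 1)
    (Fcls : Set ((Fin d → ℝ) → ℝ)) (hFne : Fcls.Nonempty)
    (hFmeas : ∀ f ∈ Fcls, Measurable f)
    (ρ : ℝ) (hρbdd : BddAbove {t | ∃ f ∈ Fcls, ∃ x ∈ cube d, t = |f x|})
    (hρ : ρ = sSup {t | ∃ f ∈ Fcls, ∃ x ∈ cube d, t = |f x|})
    (ψ : (Fin d → ℝ) × ℝ → ℝ) (hψm : Measurable ψ)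
    (M Γ γ : ℝ) (hM : 0 < M) (hΓ : 0 < Γ) (hγ : 0 < γ)
    (W : ℕ) (hW : 3 ≤ W)
    (h1 : ∀ f ∈ Fcls, ∫ z, ψ z ∂P ≤ jointLogRisk d P f)
    (h2a : ∀ t : ℝ, |t| ≤ ρ → logLoss t ≤ M)
    (h2b : ∀ z ∈ (cube d) ×ˢ ({-1, 1} : Set ℝ), |ψ z| ≤ M)
    (h3 : ∀ f ∈ Fcls,
      ∫ z, (logLoss (z.2 * f z.1) - ψ z) ^ 2 ∂P
        ≤ Γ * ∫ z, (logLoss (z.2 * f z.1) - ψ z) ∂P)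
    (h4 : ∃ fs : Fin W → (Fin d → ℝ) → ℝ, (∀ j, fs j ∈ Fcls) ∧
      ∀ f ∈ Fcls, ∃ j, ∀ x ∈ cube d, |f x - fs j x| ≤ γ)
    (fhat : (Fin n → (Fin d → ℝ) × ℝ) → (Fin d → ℝ) → ℝ)
    (hERM : IsERM d n Fcls fhat)
    (ε : ℝ) (hε : ε ∈ Set.Ioo (0 : ℝ) 1) :
    ∫ z, (jointLogRisk d P (fhat z) - ∫ w, ψ w ∂P) ∂(nSample d n P)
      ≤ 80 * ((1 + ε) ^ 2 / ε) * (Γ * Real.log (W : ℝ) / (n : ℝ))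
        + 20 * (1 + ε) * (M * Real.log (W : ℝ) / (n : ℝ))
        + 20 * (1 + ε) * Real.sqrt γ * Real.sqrt (Γ * Real.log (W : ℝ) / (n : ℝ))
        + 4 * γ
        + (1 + ε) * sInf {t | ∃ f ∈ Fcls, t = jointLogRisk d P f - ∫ w, ψ w ∂P} :=
  statement0_general d n hn P hP Fcls hFne hFmeas ρ hρbdd hρ ψ hψm M Γ γ hM hΓ hγ W hW h2a h2b h3 h4
    fhat hERM ε hε

end

end DNNLogistic
end

section
/- Let a ∈ (0,1) and let f, A, B be real numbers with A ≤ min{f, log(a/(1−a))} ≤ max{f, log(a/(1−a))} ≤ B. Then min{ 1/(4 + 2e^A + 2e^(−A)), 1/(4 + 2e^B + 2e^(−B)) } · (f − log(a/(1−a)))² ≤ a·φ(f) + (1−a)·φ(−f) − a·log(1/a) − (1−a)·log(1/(1−a)) ≤ sup{ 1/(4 + 2e^z + 2e^(−z)) : z ∈ [A,B] } · (f − log(a/(1−a)))² ≤ (1/8)·(f − log(a/(1−a)))². -/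
open MeasureTheory
open scoped ENNReal NNReal

namespace DNNLogistic

noncomputable section

/-!
Let `ψ(t) = a φ(t) + (1 - a) φ(-t)` (`condLogRisk a`). Then `ψ' = σ - a` for the sigmoid `σ`,
which vanishes at `c = log (a / (1 - a))`, where `ψ(c)` is the binary entropy of `a`, and
`ψ'' = σ (1 - σ) = 1 / (2 + e^t + e^{-t})`. If `m ≤ ψ'' ≤ M` between `c` and `f`, then
`ψ - m/2 (· - c)²` and `M/2 (· - c)² - ψ` are convex there with a critical point at `c`, so
`m/2 (f - c)² ≤ ψ(f) - ψ(c) ≤ M/2 (f - c)²`. Finally `ψ''` is a decreasing function of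
`cosh`, which is even and increasing on `[0, ∞)`: its minimum over `[A, B]` is taken at an
endpoint, and `cosh ≥ 1` gives `ψ'' ≤ 1/4`.
-/

open Real Set

theorem _root_.ConvexOn.le_of_hasDerivAt_eq_zero {S : Set ℝ} {u : ℝ → ℝ} {c x : ℝ}
    (hu : ConvexOn ℝ S u) (hc : c ∈ S) (hx : x ∈ S) (h : HasDerivAt u 0 c) : u c ≤ u x := by
  rcases lt_trichotomy c x with hcx | rfl | hxc
  · have := hu.le_slope_of_hasDerivAt hc hx hcx h
    rw [slope_def_field, le_div_iff₀ (sub_pos.2 hcx)] at this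
    linarith
  · rfl
  · have := hu.slope_le_of_hasDerivAt hx hc hxc h
    rw [slope_def_field, div_le_iff₀ (sub_pos.2 hxc)] at this
    linarith

theorem mul_sq_le_sub_of_le_deriv2 {g g' g'' : ℝ → ℝ} {c x m : ℝ}
    (hg : ∀ t ∈ uIcc c x, HasDerivAt g (g' t) t)
    (hg' : ∀ t ∈ uIcc c x, HasDerivAt g' (g'' t) t)
    (hc : g' c = 0) (hm : ∀ t ∈ uIcc c x, m ≤ g'' t) :
    m / 2 * (x - c) ^ 2 ≤ g x - g c := by
  set u : ℝ → ℝ := fun t => g t - m / 2 * (t - c) ^ 2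
  have hu : ∀ t ∈ uIcc c x, HasDerivAt u (g' t - m * (t - c)) t := fun t ht =>
    ((hg t ht).sub ((((hasDerivAt_id' t).sub_const c).pow 2).const_mul (m / 2))).congr_deriv
      (by ring)
  have hu' : ∀ t ∈ uIcc c x, HasDerivAt (fun t => g' t - m * (t - c)) (g'' t - m) t :=
    fun t ht => ((hg' t ht).sub (((hasDerivAt_id' t).sub_const c).const_mul m)).congr_deriv
      (by ring)
  have hconv : ConvexOn ℝ (uIcc c x) u :=
    convexOn_of_hasDerivWithinAt2_nonneg (convex_uIcc c x)
      (fun t ht => (hu t ht).continuousAt.continuousWithinAt)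
      (fun t ht => (hu t (interior_subset ht)).hasDerivWithinAt)
      (fun t ht => (hu' t (interior_subset ht)).hasDerivWithinAt)
      (fun t ht => sub_nonneg.2 (hm t (interior_subset ht)))
  have hcrit : HasDerivAt u 0 c := by
    simpa [hc] using hu c left_mem_uIcc
  have := hconv.le_of_hasDerivAt_eq_zero left_mem_uIcc right_mem_uIcc hcrit
  simp only [u, sub_self] at this
  linarith

theorem sub_le_mul_sq_of_deriv2_le {g g' g'' : ℝ → ℝ} {c x M : ℝ}
    (hg : ∀ t ∈ uIcc c x, HasDerivAt g (g' t) t)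
    (hg' : ∀ t ∈ uIcc c x, HasDerivAt g' (g'' t) t)
    (hc : g' c = 0) (hM : ∀ t ∈ uIcc c x, g'' t ≤ M) :
    g x - g c ≤ M / 2 * (x - c) ^ 2 := by
  have := mul_sq_le_sub_of_le_deriv2 (g := -g) (g' := -g') (g'' := -g'') (m := -M)
    (fun t ht => (hg t ht).neg) (fun t ht => (hg' t ht).neg) (by simp [hc])
    (fun t ht => neg_le_neg (hM t ht))
  simp only [Pi.neg_apply] at this
  linarith

theorem hasDerivAt_logLoss (t : ℝ) : HasDerivAt logLoss (sigmoid t - 1) t := by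
  refine (((hasDerivAt_neg' t).exp.const_add 1).log (by positivity)).congr_deriv ?_
  rw [← neg_sub, ← sigmoid_neg, ← sigmoid_mul_rexp_neg, sigmoid_def]
  ring

def condLogRisk (a t : ℝ) : ℝ := a * logLoss t + (1 - a) * logLoss (-t)

theorem hasDerivAt_condLogRisk (a t : ℝ) : HasDerivAt (condLogRisk a) (sigmoid t - a) t := by
  refine (((hasDerivAt_logLoss t).const_mul a).add
    (((hasDerivAt_logLoss (-t)).comp t (hasDerivAt_neg t)).const_mul (1 - a))).congr_deriv ?_
  rw [sigmoid_neg]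
  ring

theorem sigmoid_log_div_one_sub {a : ℝ} (ha : a ∈ Ioo (0 : ℝ) 1) :
    sigmoid (log (a / (1 - a))) = a := by
  have hdiv : 1 + (1 - a) / a = a⁻¹ := by rw [sub_div, div_self ha.1.ne']; ring
  rw [sigmoid_def, exp_neg, exp_log (div_pos ha.1 (by linarith [ha.2])), inv_div, hdiv, inv_inv]

theorem condLogRisk_log_div_one_sub {a : ℝ} (ha : a ∈ Ioo (0 : ℝ) 1) :
    condLogRisk a (log (a / (1 - a))) = a * log (1 / a) + (1 - a) * log (1 / (1 - a)) := by
  have ha0 : a ≠ 0 := ha.1.ne'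
  have h1a : 1 - a ≠ 0 := by linarith [ha.2]
  have hpos : 0 < a / (1 - a) := div_pos ha.1 (by linarith [ha.2])
  rw [condLogRisk, logLoss, logLoss, neg_neg, exp_neg, exp_log hpos]
  congr 3 <;> field_simp <;> ring

def logisticWeight (z : ℝ) : ℝ := 1 / (4 + 2 * exp z + 2 * exp (-z))

theorem logisticWeight_eq (z : ℝ) : logisticWeight z = (4 * (1 + cosh z))⁻¹ := by
  rw [logisticWeight, cosh_eq, one_div]
  ring_nf

theorem two_mul_logisticWeight (z : ℝ) :
    2 * logisticWeight z = sigmoid z * (1 - sigmoid z) := by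
  rw [← sigmoid_neg, ← sigmoid_mul_rexp_neg, sigmoid_def, logisticWeight]
  have : exp z * exp (-z) = 1 := by rw [← exp_add, add_neg_cancel, exp_zero]
  field_simp
  linear_combination (-2 : ℝ) * this

theorem logisticWeight_le_one_div_eight (z : ℝ) : logisticWeight z ≤ 1 / 8 := by
  rw [logisticWeight_eq, one_div]
  gcongr
  linarith [one_le_cosh z]

theorem min_logisticWeight_le {A B z : ℝ} (hz : z ∈ Icc A B) :
    min (logisticWeight A) (logisticWeight B) ≤ logisticWeight z := by
  have hcosh : ∀ y, |z| ≤ |y| → logisticWeight y ≤ logisticWeight z := fun y hy => by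
    rw [logisticWeight_eq, logisticWeight_eq]
    exact inv_anti₀ (by positivity) (by linarith [cosh_le_cosh.2 hy])
  have habs : |z| ≤ max |A| |B| := abs_le_max_abs_abs hz.1 hz.2
  rcases le_total |A| |B| with hAB | hAB
  · exact min_le_of_right_le (hcosh B (habs.trans_eq (max_eq_right hAB)))
  · exact min_le_of_left_le (hcosh A (habs.trans_eq (max_eq_left hAB)))

theorem bddAbove_logisticWeight_image (A B : ℝ) :
    BddAbove {s | ∃ z ∈ Icc A B, s = logisticWeight z} :=
  ⟨1 / 8, by rintro _ ⟨z, -, rfl⟩; exact logisticWeight_le_one_div_eight z⟩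

/-- Lemma A.10: two-sided quadratic bounds for the excess pointwise
logistic risk. -/
theorem statement6 (a f A B : ℝ) (ha : a ∈ Set.Ioo (0 : ℝ) 1)
    (hA : A ≤ min f (Real.log (a / (1 - a)))) (hB : max f (Real.log (a / (1 - a))) ≤ B) :
    min (1 / (4 + 2 * Real.exp A + 2 * Real.exp (-A)))
        (1 / (4 + 2 * Real.exp B + 2 * Real.exp (-B)))
      * (f - Real.log (a / (1 - a))) ^ 2
      ≤ a * logLoss f + (1 - a) * logLoss (-f)
          - a * Real.log (1 / a) - (1 - a) * Real.log (1 / (1 - a)) ∧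
    a * logLoss f + (1 - a) * logLoss (-f)
        - a * Real.log (1 / a) - (1 - a) * Real.log (1 / (1 - a))
      ≤ sSup {s | ∃ z ∈ Set.Icc A B, s = 1 / (4 + 2 * Real.exp z + 2 * Real.exp (-z))}
          * (f - Real.log (a / (1 - a))) ^ 2 ∧
    sSup {s | ∃ z ∈ Set.Icc A B, s = 1 / (4 + 2 * Real.exp z + 2 * Real.exp (-z))}
        * (f - Real.log (a / (1 - a))) ^ 2
      ≤ (1 / 8) * (f - Real.log (a / (1 - a))) ^ 2 := by
  set c := log (a / (1 - a))
  set S := {s | ∃ z ∈ Icc A B, s = logisticWeight z}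
  have hexcess : a * logLoss f + (1 - a) * logLoss (-f) - a * log (1 / a)
      - (1 - a) * log (1 / (1 - a)) = condLogRisk a f - condLogRisk a c := by
    rw [condLogRisk_log_div_one_sub ha, condLogRisk]
    ring
  have hsub : uIcc c f ⊆ Icc A B := Icc_subset_Icc (by simpa [min_comm] using hA)
    (by simpa [max_comm] using hB)
  have hderiv : ∀ t ∈ uIcc c f, HasDerivAt (condLogRisk a) (sigmoid t - a) t :=
    fun t _ => hasDerivAt_condLogRisk a t
  have hderiv2 : ∀ t ∈ uIcc c f, HasDerivAt (fun t => sigmoid t - a) (2 * logisticWeight t) t :=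
    fun t _ => two_mul_logisticWeight t ▸ (hasDerivAt_sigmoid t).sub_const a
  have hcrit : sigmoid c - a = 0 := by rw [sigmoid_log_div_one_sub ha, sub_self]
  have hSne : S.Nonempty := ⟨_, A, ⟨le_rfl, hA.trans (min_le_max.trans hB)⟩, rfl⟩
  have hSup : sSup S ≤ 1 / 8 :=
    csSup_le hSne fun _ ⟨z, _, hz⟩ => hz ▸ logisticWeight_le_one_div_eight z
  refine ⟨?_, ?_, mul_le_mul_of_nonneg_right hSup (sq_nonneg _)⟩ <;> rw [hexcess]
  · show min (logisticWeight A) (logisticWeight B) * (f - c) ^ 2 ≤ _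
    have := mul_sq_le_sub_of_le_deriv2 hderiv hderiv2 hcrit
      (m := 2 * min (logisticWeight A) (logisticWeight B))
      fun t ht => by gcongr; exact min_logisticWeight_le (hsub ht)
    calc _ = 2 * min (logisticWeight A) (logisticWeight B) / 2 * (f - c) ^ 2 := by ring
      _ ≤ _ := this
  · have := sub_le_mul_sq_of_deriv2_le hderiv hderiv2 hcrit (M := 2 * sSup S)
      fun t ht => by
        gcongr
        exact le_csSup (bddAbove_logisticWeight_image A B) ⟨t, hsub ht, rfl⟩
    calc _ ≤ 2 * sSup S / 2 * (f - c) ^ 2 := this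
      _ = sSup S * (f - c) ^ 2 := by ring

end

end DNNLogistic
end

section
/- Let δ ∈ (0,1/2), a ∈ [δ, 1−δ], and f ∈ [−log((1−δ)/δ), log((1−δ)/δ)]. Define H(a,f) = a·(φ(f) − φ(log(a/(1−a))))² + (1−a)·(φ(−f) − φ(−log(a/(1−a))))² and G(a,f) = a·φ(f) + (1−a)·φ(−f) − a·log(1/a) − (1−a)·log(1/(1−a)). Then H(a,f) ≤ 5000·(log δ)²·G(a,f). -/
open MeasureTheory
open scoped ENNReal NNReal

namespace DNNLogistic

noncomputable section

/-!
Writing `b = σ(f)` for the sigmoid, `φ(f) = -log b` and `φ(-f) = -log (1 - b)`, while the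
minimiser `log (a / (1 - a))` of the conditional risk has `σ = a`. The right-hand factor is
therefore the binary Kullback–Leibler divergence `KL(a ‖ b)`, and the left-hand side the
`a`-weighted mean of the squared log ratios. Pointwise, a log ratio `t = log (x / y) ≤ s`
satisfies `x t² ≤ (4 + s) (x t + y - x)`; summing over the two labels cancels the `y - x`
terms. Since `a, b ∈ [δ, 1 - δ]`, both log ratios are at most `s = log (1 / δ) ≥ log 2`, and
`4 + s ≤ 5000 s²`.
-/

open Real

lemma sq_le_mul_add_exp_neg_sub_one {s t : ℝ} (hs : 0 ≤ s) (hts : t ≤ s) :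
    t ^ 2 ≤ (4 + s) * (t + exp (-t) - 1) := by
  rcases le_or_gt t 2 with ht | ht
  · -- `e^{-t} = (e^{-t/2})² ≥ (1 - t/2)²`, which settles the case `t ≤ 2`
    have h_half : 1 - t / 2 ≤ exp (-(t / 2)) := by linarith [add_one_le_exp (-(t / 2))]
    have h_sq : (1 - t / 2) ^ 2 ≤ exp (-t) := by
      rw [show -t = -(t / 2) + -(t / 2) by ring, exp_add, sq]
      exact mul_le_mul h_half h_half (by linarith) (exp_pos _).le
    nlinarith [sq_nonneg t, mul_nonneg hs (sq_nonneg t)]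
  · nlinarith [exp_pos (-t), mul_nonneg (sub_nonneg.2 hts) (by linarith : (0 : ℝ) ≤ t - 1)]

lemma mul_sq_log_sub_log_le {s x y : ℝ} (hx : 0 < x) (hy : 0 < y) (hs : 0 ≤ s)
    (hxy : log x - log y ≤ s) :
    x * (log x - log y) ^ 2 ≤ (4 + s) * (x * (log x - log y) + y - x) := by
  have hy_eq : x * exp (-(log x - log y)) = y := by
    rw [neg_sub, exp_sub, exp_log hx, exp_log hy]
    field_simp
  have key := mul_le_mul_of_nonneg_left (sq_le_mul_add_exp_neg_sub_one hs hxy) hx.le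
  linear_combination key + (4 + s) * hy_eq

lemma binary_mul_sq_log_sub_log_le {s a b : ℝ} (ha0 : 0 < a) (ha1 : a < 1) (hb0 : 0 < b)
    (hb1 : b < 1) (hs : 0 ≤ s) (h₁ : log a - log b ≤ s)
    (h₂ : log (1 - a) - log (1 - b) ≤ s) :
    a * (log a - log b) ^ 2 + (1 - a) * (log (1 - a) - log (1 - b)) ^ 2
      ≤ (4 + s) * (a * (log a - log b) + (1 - a) * (log (1 - a) - log (1 - b))) := by
  have h_pos := mul_sq_log_sub_log_le ha0 hb0 hs h₁
  have h_neg := mul_sq_log_sub_log_le (sub_pos.2 ha1) (sub_pos.2 hb1) hs h₂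
  linarith

lemma sigmoid_log_div_one_sub_s9 {p : ℝ} (hp0 : 0 < p) (hp1 : p < 1) :
    sigmoid (log (p / (1 - p))) = p := by
  have : 0 < 1 - p := sub_pos.2 hp1
  rw [sigmoid_def, exp_neg, exp_log (div_pos hp0 this), inv_div]
  field_simp
  ring

lemma sigmoid_mem_Icc_of_mem_Icc_log {δ t : ℝ} (hδ0 : 0 < δ) (hδ1 : δ < 1)
    (ht : t ∈ Set.Icc (-log ((1 - δ) / δ)) (log ((1 - δ) / δ))) :
    sigmoid t ∈ Set.Icc δ (1 - δ) := by
  have h_top : sigmoid (log ((1 - δ) / δ)) = 1 - δ := by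
    simpa only [sub_sub_cancel] using
      sigmoid_log_div_one_sub_s9 (p := 1 - δ) (by linarith) (by linarith)
  have h_bot : sigmoid (-log ((1 - δ) / δ)) = δ := by
    rw [sigmoid_neg, h_top, sub_sub_cancel]
  exact ⟨h_bot ▸ sigmoid_le ht.1, h_top ▸ sigmoid_le ht.2⟩

lemma logLoss_eq_neg_log_sigmoid (t : ℝ) : logLoss t = -log (sigmoid t) := by
  rw [sigmoid_def, log_inv, neg_neg, logLoss]

lemma four_sub_log_le_of_lt_half {δ : ℝ} (hδ0 : 0 < δ) (hδ1 : δ < 1 / 2) :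
    4 - log δ ≤ 5000 * log δ ^ 2 := by
  have h : log δ < -log 2 := by
    rw [← log_inv]
    exact log_lt_log hδ0 (by linarith)
  nlinarith [log_two_gt_d9]

/-- Lemma A.11: variance-type bound for the logistic loss. -/
theorem statement9 (δ a f : ℝ) (hδ : δ ∈ Set.Ioo (0 : ℝ) (1 / 2))
    (ha : a ∈ Set.Icc δ (1 - δ))
    (hf : f ∈ Set.Icc (-Real.log ((1 - δ) / δ)) (Real.log ((1 - δ) / δ))) :
    a * (logLoss f - logLoss (Real.log (a / (1 - a)))) ^ 2
        + (1 - a) * (logLoss (-f) - logLoss (-Real.log (a / (1 - a)))) ^ 2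
      ≤ 5000 * (Real.log δ) ^ 2 *
          (a * logLoss f + (1 - a) * logLoss (-f)
            - a * Real.log (1 / a) - (1 - a) * Real.log (1 / (1 - a))) := by
  obtain ⟨hδ0, hδ1⟩ := hδ
  obtain ⟨ha₁, ha₂⟩ := ha
  obtain ⟨hb₁, hb₂⟩ := sigmoid_mem_Icc_of_mem_Icc_log hδ0 (by linarith) hf
  have h_ratio : ∀ x y, 0 < x → x ≤ 1 → δ ≤ y → log x - log y ≤ -log δ :=
    fun x y hx hx1 hy => by linarith [log_nonpos hx.le hx1, log_le_log hδ0 hy]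
  have h_var := binary_mul_sq_log_sub_log_le (by linarith) (by linarith) (by linarith)
    (by linarith) (neg_nonneg.2 (log_nonpos hδ0.le (by linarith)))
    (h_ratio a (sigmoid f) (by linarith) (by linarith) hb₁)
    (h_ratio (1 - a) (1 - sigmoid f) (by linarith) (by linarith) (by linarith))
  have h_kl :
      0 ≤ a * (log a - log (sigmoid f)) + (1 - a) * (log (1 - a) - log (1 - sigmoid f)) := by
    refine nonneg_of_mul_nonneg_right (le_trans ?_ h_var)
      (by linarith [log_nonpos hδ0.le (by linarith : δ ≤ 1)])
    have : 0 ≤ 1 - a := by linarith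
    have : 0 ≤ a := by linarith
    positivity
  simp only [logLoss_eq_neg_log_sigmoid, sigmoid_neg,
    sigmoid_log_div_one_sub_s9 (show 0 < a by linarith) (show a < 1 by linarith), one_div, log_inv]
  calc _ ≤ (4 - log δ) * _ := by convert h_var using 2 <;> ring
    _ ≤ 5000 * log δ ^ 2 * _ :=
      mul_le_mul_of_nonneg_right (four_sub_log_le_of_lt_half hδ0 hδ1) h_kl
    _ = _ := by ring

end

end DNNLogistic
end

section
/- Let k be a positive integer. Then there exists a function f̃ ∈ F^FNN_k( 1 + 2·⌈log k / log 2⌉, 2k, 26·2^(⌈log k / log 2⌉) − 20 − 2·⌈log k / log 2⌉, 1, 1 ) such that f̃(x) = max_{1 ≤ i ≤ k} |(x)_i| for every x ∈ ℝ^k. -/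
open MeasureTheory
open scoped ENNReal NNReal

namespace DNNLogistic

noncomputable section

namespace S14

def ind (b c : ℕ) : ℝ := if c = b ∨ c = b + 1 then 1 else 0

def sBase (k n j : ℕ) : ℕ := if n = 1 then 2 * min j (k - 1) else 2 * j

def wA0 (r c : ℕ) : ℝ := if c = r / 2 then (if r % 2 = 0 then 1 else -1) else 0

def wMid (k q n r c : ℕ) : ℝ :=
  if r < 2 ^ (q + 1 - n) then
    (if r % 2 = 0 then ind (sBase k n (2 * (r / 2))) c - ind (sBase k n (2 * (r / 2) + 1)) c
     else ind (sBase k n (2 * (r / 2) + 1)) c)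
  else 0

def wOut (c : ℕ) : ℝ := if c = 0 ∨ c = 1 then 1 else 0

def wAll (k q n r c : ℕ) : ℝ :=
  if n = 0 then wA0 r c
  else if n ≤ q then wMid k q n r c
  else if n = q + 1 then wOut c
  else 0

def mfun (k q : ℕ) (n : ℕ) : ℕ := if n = 0 then k else if n ≤ q + 1 then 2 * k else 1

lemma mfun_zero (k q : ℕ) : mfun k q 0 = k := rfl

lemma mfun_eq (k q n : ℕ) (h1 : 1 ≤ n) (h2 : n ≤ q + 1) : mfun k q n = 2 * k := by
  simp only [mfun]; rw [if_neg (by omega), if_pos h2]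

lemma mfun_one (k q : ℕ) : mfun k q 1 = 2 * k := mfun_eq k q 1 (by omega) (by omega)

lemma mfun_last (k q : ℕ) : mfun k q (q + 2) = 1 := by
  simp only [mfun]; rw [if_neg (by omega), if_neg (by omega)]

lemma ind_ne (b c : ℕ) (h : ind b c ≠ 0) : c = b ∨ c = b + 1 := by
  by_contra hc; exact h (if_neg hc)

lemma abs_wAll (k q n r c : ℕ) : |wAll k q n r c| ≤ 1 := by
  unfold wAll wA0 wMid wOut ind
  split_ifs <;> norm_num

lemma sum_single {M : ℕ} (b : ℕ) (hb : b < M) (a : ℝ) (h : Fin M → ℝ) :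
    (∑ c : Fin M, (if (c : ℕ) = b then a else 0) * h c) = a * h ⟨b, hb⟩ := by
  rw [Finset.sum_eq_single (⟨b, hb⟩ : Fin M)]
  · simp
  · intro c _ hc
    rw [if_neg (fun hv => hc (Fin.ext hv)), zero_mul]
  · intro hmem; exact absurd (Finset.mem_univ _) hmem

lemma sum_ind {M : ℕ} (b : ℕ) (hb : b + 1 < M) (h : Fin M → ℝ) :
    (∑ c : Fin M, ind b (c : ℕ) * h c) = h ⟨b, by omega⟩ + h ⟨b + 1, hb⟩ := by
  have e : ∀ c : Fin M, ind b (c : ℕ) * h c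
      = (if (c : ℕ) = b then (1:ℝ) else 0) * h c + (if (c : ℕ) = b + 1 then (1:ℝ) else 0) * h c := by
    intro c
    unfold ind
    by_cases h2 : (c : ℕ) = b
    · rw [if_pos (Or.inl h2), if_pos h2, if_neg (by omega)]; ring
    · by_cases h3 : (c : ℕ) = b + 1
      · rw [if_pos (Or.inr h3), if_neg h2, if_pos h3]; ring
      · rw [if_neg (by tauto), if_neg h2, if_neg h3]; ring
  rw [Finset.sum_congr rfl (fun c _ => e c), Finset.sum_add_distrib,
    sum_single b (by omega) 1 h, sum_single (b+1) hb 1 h]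
  ring


/-- recursive tournament max of `|x (min i (k-1))|` over blocks. -/
def Vm (k : ℕ) (hk : 0 < k) (x : Fin k → ℝ) : ℕ → ℕ → ℝ
  | 0, j => |x ⟨min j (k - 1), by omega⟩|
  | (s + 1), j => max (Vm k hk x s (2 * j)) (Vm k hk x s (2 * j + 1))

lemma Vm_zero (k : ℕ) (hk : 0 < k) (x : Fin k → ℝ) (j : ℕ) :
    Vm k hk x 0 j = |x ⟨min j (k - 1), by omega⟩| := rfl

lemma Vm_succ (k : ℕ) (hk : 0 < k) (x : Fin k → ℝ) (s j : ℕ) :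
    Vm k hk x (s + 1) j = max (Vm k hk x s (2 * j)) (Vm k hk x s (2 * j + 1)) := rfl

lemma Vm_mem (k : ℕ) (hk : 0 < k) (x : Fin k → ℝ) (s j : ℕ) :
    ∃ i, j * 2 ^ s ≤ i ∧ i < (j + 1) * 2 ^ s ∧ Vm k hk x s j = Vm k hk x 0 i := by
  induction s generalizing j with
  | zero => exact ⟨j, by omega, by omega, rfl⟩
  | succ s ih =>
    have h1 : 2 * j * 2 ^ s = j * 2 ^ (s + 1) := by rw [pow_succ]; ring
    have h2 : (2 * j + 1) * 2 ^ s + 2 ^ s = (j + 1) * 2 ^ (s + 1) := by rw [pow_succ]; ring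
    have h3 : (2 * j + 1) * 2 ^ s = 2 * j * 2 ^ s + 2 ^ s := by ring
    have h4 : (2 * j + 1 + 1) * 2 ^ s = (2 * j + 1) * 2 ^ s + 2 ^ s := by ring
    rcases le_total (Vm k hk x s (2 * j + 1)) (Vm k hk x s (2 * j)) with h | h
    · obtain ⟨i, hi1, hi2, hi3⟩ := ih (2 * j)
      exact ⟨i, by omega, by omega, by rw [Vm_succ, max_eq_left h]; exact hi3⟩
    · obtain ⟨i, hi1, hi2, hi3⟩ := ih (2 * j + 1)
      exact ⟨i, by omega, by omega, by rw [Vm_succ, max_eq_right h]; exact hi3⟩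

lemma Vm_le (k : ℕ) (hk : 0 < k) (x : Fin k → ℝ) (s j i : ℕ)
    (h1 : j * 2 ^ s ≤ i) (h2 : i < (j + 1) * 2 ^ s) :
    Vm k hk x 0 i ≤ Vm k hk x s j := by
  induction s generalizing j with
  | zero =>
    simp only [pow_zero, mul_one] at h1 h2
    have hij : i = j := by omega
    rw [hij]
  | succ s ih =>
    have e1 : j * 2 ^ (s + 1) = 2 * j * 2 ^ s := by rw [pow_succ]; ring
    have e2 : (j + 1) * 2 ^ (s + 1) = (2 * j + 1 + 1) * 2 ^ s := by rw [pow_succ]; ring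
    have e3 : (2 * j + 1) * 2 ^ s = 2 * j * 2 ^ s + 2 ^ s := by ring
    have e4 : (2 * j + 1 + 1) * 2 ^ s = (2 * j + 1) * 2 ^ s + 2 ^ s := by ring
    rw [e1] at h1; rw [e2] at h2
    rcases lt_or_ge i ((2 * j + 1) * 2 ^ s) with h | h
    · exact le_trans (ih (2 * j) h1 h) (le_max_left _ _ |>.trans_eq (Vm_succ k hk x s j).symm)
    · exact le_trans (ih (2 * j + 1) h (by omega))
        (le_max_right _ _ |>.trans_eq (Vm_succ k hk x s j).symm)

lemma Vm_nonneg (k : ℕ) (hk : 0 < k) (x : Fin k → ℝ) (s j : ℕ) : 0 ≤ Vm k hk x s j := by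
  obtain ⟨i, _, _, h⟩ := Vm_mem k hk x s j
  rw [h, Vm_zero]; positivity

lemma max_trick (a b : ℝ) (hb : 0 ≤ b) : max (a - b) 0 + b = max a b := by
  rcases le_total a b with h | h
  · rw [max_eq_right (by linarith), max_eq_right h, zero_add]
  · rw [max_eq_left (by linarith), max_eq_left h]; ring

lemma abs_split (a : ℝ) : max a 0 + max (-a) 0 = |a| := by
  rcases le_total 0 a with h | h
  · rw [max_eq_left h, max_eq_right (by linarith), abs_of_nonneg h]; ring
  · rw [max_eq_right h, max_eq_left (by linarith), abs_of_nonpos h]; ring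

lemma ncard_fin_le (M N : ℕ) (w : ℕ → ℕ → ℝ) (t : ℕ → Finset ℕ)
    (ht : ∀ r c : ℕ, c < N → w r c ≠ 0 → c ∈ t r) :
    {p : Fin M × Fin N | w p.1.val p.2.val ≠ 0}.ncard ≤ ∑ r ∈ Finset.range M, (t r).card := by
  set T : Finset (ℕ × ℕ) := (Finset.range M).biUnion (fun r => (t r).image (fun c => (r, c))) with hT
  have h1 : {p : Fin M × Fin N | w p.1.val p.2.val ≠ 0}.ncard ≤ (T : Set (ℕ × ℕ)).ncard := by
    apply Set.ncard_le_ncard_of_injOn (fun p => (p.1.val, p.2.val))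
    · intro p hp
      simp only [hT, Finset.coe_biUnion, Finset.coe_image, Set.mem_iUnion]
      exact ⟨p.1.val, by simp [p.1.isLt], by
        simp only [Finset.coe_image, Set.mem_image]
        exact ⟨p.2.val, ht _ _ p.2.isLt hp, rfl⟩⟩
    · intro p _ p' _ he
      have h1 : p.1.val = p'.1.val := congrArg Prod.fst he
      have h2 : p.2.val = p'.2.val := congrArg Prod.snd he
      exact Prod.ext (Fin.ext h1) (Fin.ext h2)
  rw [Set.ncard_coe_finset] at h1
  exact le_trans h1 (le_trans (Finset.card_biUnion_le) (Finset.sum_le_sum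
    (fun r _ => Finset.card_image_le)))

lemma card_quad (a b c d : ℕ) : ({a, b, c, d} : Finset ℕ).card ≤ 4 := by
  have h1 := Finset.card_insert_le a ({b, c, d} : Finset ℕ)
  have h2 := Finset.card_insert_le b ({c, d} : Finset ℕ)
  have h3 := Finset.card_insert_le c ({d} : Finset ℕ)
  simp only [Finset.card_singleton] at h3
  omega

lemma sum_if_lt (M T c : ℕ) (h : T ≤ M) :
    ∑ r ∈ Finset.range M, (if r < T then c else 0) = c * T := by
  rw [← Finset.sum_subset (Finset.range_subset_range.mpr h)
    (fun r _ hr => by rw [if_neg (by simpa using hr)])]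
  rw [Finset.sum_congr rfl (fun r hr => if_pos (Finset.mem_range.mp hr))]
  simp [mul_comm]

lemma geo (q : ℕ) : (∑ i ∈ Finset.range q, 4 * 2 ^ (q - i)) + 8 = 8 * 2 ^ q := by
  induction q with
  | zero => simp
  | succ n ih =>
    rw [Finset.sum_range_succ]
    have e : ∀ i ∈ Finset.range n, 4 * 2 ^ (n + 1 - i) = 2 * (4 * 2 ^ (n - i)) := by
      intro i hi
      have hi' := Finset.mem_range.mp hi
      have : n + 1 - i = (n - i) + 1 := by omega
      rw [this, pow_succ]; ring
    rw [Finset.sum_congr rfl e, ← Finset.mul_sum]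
    have : n + 1 - n = 1 := by omega
    rw [this]
    have : (2:ℕ) ^ (n + 1) = 2 * 2 ^ n := by rw [pow_succ]; ring
    omega

lemma q14 (q : ℕ) : 2 * q + 14 ≤ 16 * 2 ^ q := by
  induction q with
  | zero => norm_num
  | succ n ih =>
    have : (2:ℕ) ^ (n + 1) = 2 * 2 ^ n := by rw [pow_succ]; ring
    omega


def Wnet (k q : ℕ) : ∀ n : ℕ, Matrix (Fin (mfun k q (n + 1))) (Fin (mfun k q n)) ℝ :=
  fun n => Matrix.of fun i j => wAll k q n i.val j.val

def vnet (k q : ℕ) : ∀ n : ℕ, Fin (mfun k q n) → ℝ := fun _ _ => 0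

def Hnet (k q : ℕ) (x : Fin k → ℝ) (n : ℕ) : Fin (mfun k q n) → ℝ :=
  DNNLogistic.fnnHidden (mfun k q) (Wnet k q) (vnet k q) n
    (fun i => x (Fin.cast (mfun_zero k q) i))

def ftnet (k q : ℕ) : (Fin k → ℝ) → ℝ := fun x =>
  (Wnet k q (q + 1)).mulVec (Hnet k q x (q + 1)) (Fin.cast (mfun_last k q).symm 0)

lemma Hnet_zero (k q : ℕ) (x : Fin k → ℝ) (i : Fin (mfun k q 0)) :
    Hnet k q x 0 i = x (Fin.cast (mfun_zero k q) i) := rfl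

lemma Hnet_succ (k q : ℕ) (x : Fin k → ℝ) (n : ℕ) (i : Fin (mfun k q (n + 1))) :
    Hnet k q x (n + 1) i = max (∑ c, wAll k q n i.val c.val * Hnet k q x n c) 0 := by
  show max ((Wnet k q n).mulVec (Hnet k q x n) i - vnet k q (n + 1) i) 0 = _
  simp [Wnet, vnet, Matrix.mulVec, dotProduct]


lemma sBase_zero (k n : ℕ) : sBase k n 0 = 0 := by
  unfold sBase; split <;> simp

lemma sBase_one (k j : ℕ) : sBase k 1 j = 2 * min j (k - 1) := rfl

lemma sBase_ge2 (k n j : ℕ) (h : n ≠ 1) : sBase k n j = 2 * j := if_neg h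

lemma sBase_lt (k q n j : ℕ) (hk : 0 < k) (h2q : 2 ^ q ≤ 2 * k)
    (h1 : 1 ≤ n) (h2 : n ≤ q + 1) (hj : j < 2 ^ (q + 1 - n)) :
    sBase k n j + 1 < 2 * k := by
  rcases eq_or_ne n 1 with hn | hn
  · rw [hn, sBase_one]; omega
  · rw [sBase_ge2 k n j hn]
    have hq1 : 1 ≤ q := by omega
    have hp : 2 ^ (q + 1 - n) ≤ 2 ^ (q - 1) :=
      Nat.pow_le_pow_right (by norm_num) (by omega)
    have hp2 : 2 ^ (q - 1) * 2 = 2 ^ q := by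
      rw [← pow_succ]; congr 1; omega
    omega

lemma Hnet_one (k q : ℕ) (hk : 0 < k) (x : Fin k → ℝ) (i : Fin (mfun k q 1)) :
    Hnet k q x 1 i = max ((if i.val % 2 = 0 then (1 : ℝ) else -1) *
      x ⟨i.val / 2, by
        have h := i.isLt; have hm := mfun_one k q; omega⟩) 0 := by
  have hb : i.val / 2 < mfun k q 0 := by
    have h := i.isLt; have hm := mfun_one k q; have hm0 := mfun_zero k q; omega
  rw [Hnet_succ]
  congr 1
  have e : ∀ c : Fin (mfun k q 0), wAll k q 0 i.val c.val * Hnet k q x 0 c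
      = (if (c : ℕ) = i.val / 2 then (if i.val % 2 = 0 then (1 : ℝ) else -1) else 0)
        * Hnet k q x 0 c := fun c => rfl
  rw [Finset.sum_congr rfl (fun c _ => e c), sum_single (i.val / 2) hb _ _, Hnet_zero]
  congr 1

lemma key (k q : ℕ) (hk : 0 < k) (h2q : 2 ^ q ≤ 2 * k) (x : Fin k → ℝ) :
    ∀ s, s ≤ q → ∀ j, j < 2 ^ (q - s) →
    ∀ (i1 i2 : Fin (mfun k q (s + 1))),
      (i1 : ℕ) = sBase k (s + 1) j → (i2 : ℕ) = sBase k (s + 1) j + 1 →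
      Hnet k q x (s + 1) i1 + Hnet k q x (s + 1) i2 = Vm k hk x s j := by
  intro s
  induction s with
  | zero =>
    intro _ j hj i1 i2 hi1 hi2
    rw [sBase_one] at hi1 hi2
    have hmk : min j (k - 1) < k := by omega
    rw [Hnet_one k q hk x i1, Hnet_one k q hk x i2]
    rw [if_pos (by omega : i1.val % 2 = 0), if_neg (by omega : ¬ i2.val % 2 = 0)]
    have e1 : x ⟨i1.val / 2, by have h := i1.isLt; have hm := mfun_one k q; omega⟩
        = x ⟨min j (k - 1), hmk⟩ := congrArg x (Fin.ext (by simp; omega))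
    have e2 : x ⟨i2.val / 2, by have h := i2.isLt; have hm := mfun_one k q; omega⟩
        = x ⟨min j (k - 1), hmk⟩ := congrArg x (Fin.ext (by simp; omega))
    rw [e1, e2, one_mul, neg_one_mul, abs_split, Vm_zero]
  | succ s ih =>
    intro hsq j hj i1 i2 hi1 hi2
    have hs : s ≤ q := by omega
    rw [sBase_ge2 k (s + 2) j (by omega)] at hi1 hi2
    have hpow : 2 ^ (q - s) = 2 ^ (q - s - 1) * 2 := by
      rw [← pow_succ]; congr 1; omega
    have hqs : q - (s + 1) = q - s - 1 := by omega
    rw [hqs] at hj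
    have hr1 : 2 * j < 2 ^ (q - s) := by omega
    have hr2 : 2 * j + 1 < 2 ^ (q - s) := by omega
    have hqn : q + 1 - (s + 1) = q - s := by omega
    -- bounds on the two source values
    have hb1 : sBase k (s + 1) (2 * j) + 1 < 2 * k :=
      sBase_lt k q (s + 1) (2 * j) hk h2q (by omega) (by omega) (by rw [hqn]; exact hr1)
    have hb2 : sBase k (s + 1) (2 * j + 1) + 1 < 2 * k :=
      sBase_lt k q (s + 1) (2 * j + 1) hk h2q (by omega) (by omega) (by rw [hqn]; exact hr2)
    have hmm : mfun k q (s + 1) = 2 * k := mfun_eq k q (s + 1) (by omega) (by omega)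
    have hb1' : sBase k (s + 1) (2 * j) + 1 < mfun k q (s + 1) := by omega
    have hb2' : sBase k (s + 1) (2 * j + 1) + 1 < mfun k q (s + 1) := by omega
    set a := Vm k hk x s (2 * j) with ha
    set b := Vm k hk x s (2 * j + 1) with hbv
    have hA : Hnet k q x (s + 1) ⟨_, Nat.lt_of_succ_lt hb1'⟩
        + Hnet k q x (s + 1) ⟨_, hb1'⟩ = a :=
      ih hs (2 * j) hr1 _ _ rfl rfl
    have hB : Hnet k q x (s + 1) ⟨_, Nat.lt_of_succ_lt hb2'⟩
        + Hnet k q x (s + 1) ⟨_, hb2'⟩ = b :=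
      ih hs (2 * j + 1) hr2 _ _ rfl rfl
    have hbnn : 0 ≤ b := Vm_nonneg k hk x s (2 * j + 1)
    -- compute the two units of layer s+2
    have hw : ∀ (r : ℕ), r < 2 ^ (q - s) → ∀ c : ℕ,
        wAll k q (s + 1) r c = (if r % 2 = 0
          then ind (sBase k (s + 1) (2 * (r / 2))) c - ind (sBase k (s + 1) (2 * (r / 2) + 1)) c
          else ind (sBase k (s + 1) (2 * (r / 2) + 1)) c) := by
      intro r hr c
      unfold wAll wMid
      rw [if_neg (by omega), if_pos (by omega), if_pos (by rw [hqn]; exact hr)]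
    have hu1 : Hnet k q x (s + 2) i1 = max (a - b) 0 := by
      rw [Hnet_succ]
      have e : ∀ c : Fin (mfun k q (s + 1)),
          wAll k q (s + 1) i1.val c.val * Hnet k q x (s + 1) c
          = (ind (sBase k (s + 1) (2 * j)) c.val - ind (sBase k (s + 1) (2 * j + 1)) c.val)
            * Hnet k q x (s + 1) c := by
        intro c
        rw [hw i1.val (by omega) c.val, if_pos (by omega : i1.val % 2 = 0)]
        have : i1.val / 2 = j := by omega
        rw [this]
      rw [Finset.sum_congr rfl (fun c _ => e c)]
      simp only [sub_mul, Finset.sum_sub_distrib]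
      rw [sum_ind _ hb1', sum_ind _ hb2', hA, hB]
    have hu2 : Hnet k q x (s + 2) i2 = b := by
      rw [Hnet_succ]
      have e : ∀ c : Fin (mfun k q (s + 1)),
          wAll k q (s + 1) i2.val c.val * Hnet k q x (s + 1) c
          = ind (sBase k (s + 1) (2 * j + 1)) c.val * Hnet k q x (s + 1) c := by
        intro c
        rw [hw i2.val (by omega) c.val, if_neg (by omega : ¬ i2.val % 2 = 0)]
        have : i2.val / 2 = j := by omega
        rw [this]
      rw [Finset.sum_congr rfl (fun c _ => e c), sum_ind _ hb2', hB, max_eq_left hbnn]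
    rw [hu1, hu2, max_trick a b hbnn, Vm_succ]

lemma corr (k q : ℕ) (hk : 0 < k) (hkq : k ≤ 2 ^ q) (h2q : 2 ^ q ≤ 2 * k)
    (x : Fin k → ℝ) : ftnet k q x = Vm k hk x q 0 := by
  have hmm : mfun k q (q + 1) = 2 * k := mfun_eq k q (q + 1) (by omega) (by omega)
  have h1lt : (1 : ℕ) < mfun k q (q + 1) := by omega
  have hww : ∀ r c : ℕ, wAll k q (q + 1) r c = ind 0 c := by
    intro r c
    unfold wAll wOut ind
    rw [if_neg (by omega), if_neg (by omega), if_pos rfl]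
  have e0 : ftnet k q x = ∑ c : Fin (mfun k q (q + 1)), ind 0 (c : ℕ) * Hnet k q x (q + 1) c := by
    show (Wnet k q (q + 1)).mulVec (Hnet k q x (q + 1)) _ = _
    simp only [Wnet, Matrix.mulVec, dotProduct, Matrix.of_apply]
    exact Finset.sum_congr rfl (fun c _ => by rw [hww])
  rw [e0, sum_ind 0 h1lt]
  have h0 : (0 : ℕ) < 2 ^ (q - q) := by
    have : q - q = 0 := by omega
    rw [this]; norm_num
  have := key k q hk h2q x q (le_refl q) 0 h0
    ⟨0, by omega⟩ ⟨1, h1lt⟩ (by simp [sBase_zero]) (by simp [sBase_zero])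
  exact this

lemma corr' (k q : ℕ) (hk : 0 < k) (hkq : k ≤ 2 ^ q) (h2q : 2 ^ q ≤ 2 * k)
    (x : Fin k → ℝ) (hne : (Finset.univ : Finset (Fin k)).Nonempty) :
    ftnet k q x = Finset.univ.sup' hne fun i => |x i| := by
  rw [corr k q hk hkq h2q x]
  apply le_antisymm
  · obtain ⟨i, _, _, h3⟩ := Vm_mem k hk x q 0
    rw [h3, Vm_zero]
    exact Finset.le_sup' (fun i => |x i|) (Finset.mem_univ ⟨min i (k - 1), by omega⟩)
  · apply Finset.sup'_le
    intro i0 _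
    have hle := Vm_le k hk x q 0 i0.val (by omega)
      (by have := i0.isLt; have h1 : (0 + 1) * 2 ^ q = 2 ^ q := by ring
          omega)
    rw [Vm_zero] at hle
    have e : x ⟨min (i0.val) (k - 1), by omega⟩ = x i0 :=
      congrArg x (Fin.ext (by have := i0.isLt; simp; omega))
    rwa [e] at hle

lemma wAll_top (k q r c : ℕ) : wAll k q (q + 1) r c = ind 0 c := by
  unfold wAll wOut ind
  rw [if_neg (by omega), if_neg (by omega), if_pos rfl]

lemma count0 (k q : ℕ) :
    {p : Fin (mfun k q (0 + 1)) × Fin (mfun k q 0) | Wnet k q 0 p.1 p.2 ≠ 0}.ncard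
      ≤ 2 * k := by
  refine le_trans (ncard_fin_le (mfun k q 1) (mfun k q 0) (wAll k q 0)
    (fun r => {r / 2}) ?_) ?_
  · intro r c _ hne
    rw [Finset.mem_singleton]
    by_contra hc
    exact hne (if_neg hc)
  · simp [mfun_one]

lemma countMid (k q i : ℕ) (hi : i < q) (h2q : 2 ^ q ≤ 2 * k) :
    {p : Fin (mfun k q (i + 1 + 1)) × Fin (mfun k q (i + 1)) |
        Wnet k q (i + 1) p.1 p.2 ≠ 0}.ncard ≤ 4 * 2 ^ (q - i) := by
  refine le_trans (ncard_fin_le (mfun k q (i + 1 + 1)) (mfun k q (i + 1)) (wAll k q (i + 1))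
    (fun r => if r < 2 ^ (q - i) then
        {sBase k (i + 1) (2 * (r / 2)), sBase k (i + 1) (2 * (r / 2)) + 1,
          sBase k (i + 1) (2 * (r / 2) + 1), sBase k (i + 1) (2 * (r / 2) + 1) + 1}
      else ∅) ?_) ?_
  · intro r c _ hne
    have he : q + 1 - (i + 1) = q - i := by omega
    have hall : wAll k q (i + 1) r c = wMid k q (i + 1) r c := by
      unfold wAll; rw [if_neg (by omega), if_pos (by omega)]
    rw [hall] at hne
    unfold wMid at hne
    rw [he] at hne
    by_cases hr : r < 2 ^ (q - i)
    · rw [if_pos hr] at hne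
      by_cases hp : r % 2 = 0
      · rw [if_pos hp] at hne
        have hor : ind (sBase k (i + 1) (2 * (r / 2))) c ≠ 0
            ∨ ind (sBase k (i + 1) (2 * (r / 2) + 1)) c ≠ 0 := by
          by_contra h
          push_neg at h
          apply hne
          rw [h.1, h.2]; ring
        rcases hor with h | h
        · rcases ind_ne _ _ h with h' | h' <;> simp [hr, h']
        · rcases ind_ne _ _ h with h' | h' <;> simp [hr, h']
      · rw [if_neg hp] at hne
        rcases ind_ne _ _ hne with h' | h' <;> simp [hr, h']
    · exact absurd (if_neg hr) hne
  · have hm : mfun k q (i + 1 + 1) = 2 * k := mfun_eq k q (i + 2) (by omega) (by omega)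
    calc ∑ r ∈ Finset.range (mfun k q (i + 1 + 1)), _
        ≤ ∑ r ∈ Finset.range (mfun k q (i + 1 + 1)), (if r < 2 ^ (q - i) then 4 else 0) := by
          apply Finset.sum_le_sum
          intro r _
          split
          · exact card_quad _ _ _ _
          · simp
      _ = 4 * 2 ^ (q - i) := by
          apply sum_if_lt
          have h1 : 2 ^ (q - i) ≤ 2 ^ q := Nat.pow_le_pow_right (by norm_num) (by omega)
          omega

lemma countLast (k q : ℕ) :
    {p : Fin (mfun k q (q + 1 + 1)) × Fin (mfun k q (q + 1)) |
        Wnet k q (q + 1) p.1 p.2 ≠ 0}.ncard ≤ 2 := by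
  refine le_trans (ncard_fin_le (mfun k q (q + 1 + 1)) (mfun k q (q + 1)) (wAll k q (q + 1))
    (fun _ => {0, 1}) ?_) ?_
  · intro r c _ hne
    rw [wAll_top] at hne
    rcases ind_ne _ _ hne with h' | h' <;> simp [h']
  · rw [mfun_last]
    simp

lemma total_count (k q : ℕ) (hk : 0 < k) (hkq : k ≤ 2 ^ q) (h2q : 2 ^ q ≤ 2 * k) :
    (∑ n ∈ Finset.range (q + 1 + 1),
      {p : Fin (mfun k q (n + 1)) × Fin (mfun k q n) | Wnet k q n p.1 p.2 ≠ 0}.ncard)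
      + 20 + 2 * q ≤ 26 * 2 ^ q := by
  set f : ℕ → ℕ := fun n =>
    {p : Fin (mfun k q (n + 1)) × Fin (mfun k q n) | Wnet k q n p.1 p.2 ≠ 0}.ncard with hf
  have e1 : ∑ n ∈ Finset.range (q + 1 + 1), f n
      = (∑ i ∈ Finset.range (q + 1), f (i + 1)) + f 0 := Finset.sum_range_succ' f (q + 1)
  have e2 : ∑ i ∈ Finset.range (q + 1), f (i + 1)
      = (∑ i ∈ Finset.range q, f (i + 1)) + f (q + 1) := Finset.sum_range_succ _ q
  have h0 : f 0 ≤ 2 * k := count0 k q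
  have hl : f (q + 1) ≤ 2 := countLast k q
  have hm : ∑ i ∈ Finset.range q, f (i + 1) ≤ ∑ i ∈ Finset.range q, 4 * 2 ^ (q - i) :=
    Finset.sum_le_sum (fun i hi => countMid k q i (Finset.mem_range.mp hi) h2q)
  have hg := geo q
  have h14 := q14 q
  rw [e1, e2]
  omega

lemma exists_net (k q : ℕ) (hk : 0 < k) (hkq : k ≤ 2 ^ q) (h2q : 2 ^ q ≤ 2 * k)
    (G S : ℝ) (hG : (q : ℝ) + 1 ≤ G) (hS : 26 * (2 : ℝ) ^ q - 20 - 2 * q ≤ S) :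
    DNNLogistic.IsFNN k G (2 * (k : ℝ)) S 1 1 (ftnet k q) ∧
      ∀ (x : Fin k → ℝ) (hne : (Finset.univ : Finset (Fin k)).Nonempty),
        ftnet k q x = Finset.univ.sup' hne fun i => |x i| := by
  constructor
  · refine ⟨q + 1, mfun k q, Wnet k q, vnet k q, mfun_zero k q, mfun_last k q,
      by omega, ?_, ?_, ?_, ?_, ?_, ?_, fun x => rfl⟩
    · push_cast; linarith
    · intro n h1 h2
      rw [mfun_eq k q n h1 h2]
      push_cast
      norm_num
    · have hv : (∑ n ∈ Finset.Icc 1 (q + 1),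
          {j : Fin (mfun k q n) | vnet k q n j ≠ 0}.ncard) = 0 := by
        apply Finset.sum_eq_zero
        intro n _
        have : {j : Fin (mfun k q n) | vnet k q n j ≠ 0} = ∅ := by
          ext j; simp [vnet]
        rw [this, Set.ncard_empty]
      rw [hv]
      have ht := total_count k q hk hkq h2q
      refine le_trans ?_ hS
      have hc : ((∑ n ∈ Finset.range (q + 1 + 1),
          {p : Fin (mfun k q (n + 1)) × Fin (mfun k q n) | Wnet k q n p.1 p.2 ≠ 0}.ncard
          + 20 + 2 * q : ℕ) : ℝ) ≤ ((26 * 2 ^ q : ℕ) : ℝ) := Nat.cast_le.mpr ht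
      push_cast at hc ⊢
      linarith
    · intro n _ i j
      exact abs_wAll k q n i.val j.val
    · intro n _ _ j
      simp [vnet]
    · intro x hx
      have hne : (Finset.univ : Finset (Fin k)).Nonempty :=
        Finset.univ_nonempty_iff.mpr (Fin.pos_iff_nonempty.mp hk)
      rw [corr' k q hk hkq h2q x hne]
      have hub : (Finset.univ.sup' hne fun i => |x i|) ≤ 1 := by
        apply Finset.sup'_le
        intro i _
        have h1 := (hx i).1
        have h2 := (hx i).2
        exact abs_le.mpr ⟨by linarith, h2⟩
      have hnn : (0:ℝ) ≤ Finset.univ.sup' hne fun i => |x i| :=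
        le_trans (abs_nonneg (x ⟨0, hk⟩))
          (Finset.le_sup' (fun i => |x i|) (Finset.mem_univ (⟨0, hk⟩ : Fin k)))
      rw [abs_of_nonneg hnn]
      exact ENNReal.ofReal_le_one.mpr hub
  · exact corr' k q hk hkq h2q

end S14

/-- Lemma: a ReLU network computing the sup norm `max_i |x_i|`. -/
theorem statement14 (k : ℕ) (hk : 0 < k) :
    ∃ ft : (Fin k → ℝ) → ℝ,
      IsFNN k (1 + 2 * (⌈Real.log (k : ℝ) / Real.log 2⌉ : ℝ)) (2 * (k : ℝ))
        (26 * (2 : ℝ) ^ ⌈Real.log (k : ℝ) / Real.log 2⌉ - 20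
          - 2 * (⌈Real.log (k : ℝ) / Real.log 2⌉ : ℝ))
        1 1 ft ∧
      ∀ x : Fin k → ℝ,
        ft x = Finset.univ.sup' (Finset.univ_nonempty_iff.mpr (Fin.pos_iff_nonempty.mp hk))
          fun i => |x i| := by
  have hk1 : (1 : ℝ) ≤ (k : ℝ) := by exact_mod_cast hk
  have hlogk : 0 ≤ Real.log k := Real.log_nonneg hk1
  have hlog2 : 0 < Real.log 2 := Real.log_pos (by norm_num)
  obtain ⟨q, hq⟩ : ∃ q : ℕ, ⌈Real.log (k : ℝ) / Real.log 2⌉ = (q : ℤ) :=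
    ⟨(⌈Real.log (k : ℝ) / Real.log 2⌉).toNat,
      (Int.toNat_of_nonneg (Int.ceil_nonneg (div_nonneg hlogk hlog2.le))).symm⟩
  have hkq : k ≤ 2 ^ q := by
    have h1 := Int.le_ceil (Real.log (k : ℝ) / Real.log 2)
    rw [hq] at h1
    push_cast at h1
    have h2 : Real.log k ≤ (q : ℝ) * Real.log 2 := (div_le_iff₀ hlog2).mp h1
    have h3 : (k : ℝ) ≤ 2 ^ q := by
      have hk0 : (0 : ℝ) < k := by exact_mod_cast hk
      apply (Real.log_le_log_iff hk0 (by positivity : (0 : ℝ) < 2 ^ q)).mp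
      rw [Real.log_pow]
      exact h2
    exact_mod_cast h3
  have h2q : 2 ^ q ≤ 2 * k := by
    cases q with
    | zero => simp; omega
    | succ s =>
      have hlt : ((s : ℕ) : ℝ) < Real.log k / Real.log 2 := by
        by_contra h
        push_neg at h
        have h' : Real.log (k : ℝ) / Real.log 2 ≤ ((s : ℤ) : ℝ) := by exact_mod_cast h
        have := Int.ceil_le.mpr h'
        omega
      have h2 : (s : ℝ) * Real.log 2 < Real.log k := (lt_div_iff₀ hlog2).mp hlt
      have h3 : (2 : ℝ) ^ s < k := by
        apply (Real.log_lt_log_iff (by positivity : (0 : ℝ) < 2 ^ s)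
          (by exact_mod_cast hk : (0 : ℝ) < k)).mp
        rw [Real.log_pow]
        exact h2
      have h4 : 2 ^ s < k := by exact_mod_cast h3
      have h5 : 2 ^ (s + 1) = 2 * 2 ^ s := by rw [pow_succ]; ring
      omega
  rw [hq]
  simp only [zpow_natCast, Int.cast_natCast]
  obtain ⟨h1, h2⟩ := S14.exists_net k q hk hkq h2q
    (1 + 2 * (q : ℝ)) (26 * (2 : ℝ) ^ q - 20 - 2 * q)
    (by have : (0:ℝ) ≤ (q:ℝ) := Nat.cast_nonneg q; linarith) (le_refl _)
  exact ⟨S14.ftnet k q, h1, fun x => h2 x _⟩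






end

end DNNLogistic
end
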